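/- arXiv:1407.5649 — 4 statements merged into one kernel-verified Lean document; each statement's English description precedes it below -/
import Mathlib

section
/- Let Ω be a finite nonempty set, r : Ω → ℝ, φ : Δ(Ω) → Δ(Ω) affine continuous, and δ ∈ [0,1). If V₁ and V₂ are bounded functions from Δ(Ω) to ℝ that both satisfy the dynamic programming equation, then V₁ = V₂; i.e., the value function V_δ is characterized as the unique bounded solution of the dynamic programming equation. -/
open MeasureTheory Set

noncomputable section

variable {Ω : Type*}

/-- The investment region `I = {p ∈ Δ(Ω) : ⟨p,r⟩ ≥ 0}`. -/
def invest [Fintype Ω] (r : Ω → ℝ) : Set (Ω → ℝ) :=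
  {p | p ∈ stdSimplex ℝ Ω ∧ 0 ≤ ∑ ω, p ω * r ω}

/-- The set `S(p)` of splittings at `p`: Borel probability measures on `ℝ^Ω` carried by the
simplex `Δ(Ω)` with barycenter `p`. -/
def Splittings [Fintype Ω] (p : Ω → ℝ) : Set (Measure (Ω → ℝ)) :=
  {μ | IsProbabilityMeasure μ ∧ μ (stdSimplex ℝ Ω) = 1 ∧ ∫ q, q ∂μ = p}

/-- The payoff `(1−δ)·μ(I) + δ·∫ V(φ(q)) dμ(q)` appearing in the dynamic programming
equation. -/
def dppPayoff [Fintype Ω] (r : Ω → ℝ) (δ : ℝ) (φ : (Ω → ℝ) → Ω → ℝ)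
    (V : (Ω → ℝ) → ℝ) (μ : Measure (Ω → ℝ)) : ℝ :=
  (1 - δ) * (μ (invest r)).toReal + δ * ∫ q in stdSimplex ℝ Ω, V (φ q) ∂μ

/-- `V` satisfies the dynamic programming equation
`V(p) = sup_{μ ∈ S(p)} [(1−δ)·μ(I) + δ·∫ V(φ(q)) dμ(q)]` on the simplex. -/
def SatisfiesDPP [Fintype Ω] (r : Ω → ℝ) (δ : ℝ) (φ : (Ω → ℝ) → Ω → ℝ)
    (V : (Ω → ℝ) → ℝ) : Prop :=
  ∀ p ∈ stdSimplex ℝ Ω, V p = sSup (dppPayoff r δ φ V '' Splittings p)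

/-!
Since a solution `V` need not be measurable, `∫ V ∘ φ dμ` may be the junk value `0`, so the
contraction argument is run over finitely supported splittings only. These suffice: a bounded
solution takes values in `[0, 1]`, and for `μ ∈ S(p)` the barycenter of `q ↦ (q, payoff)` lies in
the closure of the convex hull of the hypograph of the posterior value over the face of `Δ(Ω)`
spanned by `p`. A nearby convex combination `q` of points of that face satisfies
`(1 - θ) q ≤ p`, so mixing in one extra posterior with weight `θ` splits `p` exactly. On finite
splittings the payoffs of two solutions differ by `δ` times an average of `V₁ ∘ φ - V₂ ∘ φ`, hence
`sup (V₁ - V₂) ≤ δ · sup (V₁ - V₂)`, which forces `V₁ ≤ V₂`.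
-/

open Filter Topology

namespace MeasureTheory.Measure

variable {X ι : Type*} [MeasurableSpace X] {t : Finset ι} {w : ι → ℝ} {z : ι → X}

def diracCombination (t : Finset ι) (w : ι → ℝ) (z : ι → X) : Measure X :=
  ∑ i ∈ t, ENNReal.ofReal (w i) • dirac (z i)

theorem diracCombination_apply_of_forall_mem {s : Set X} (hw : ∀ i ∈ t, 0 ≤ w i)
    (hz : ∀ i ∈ t, z i ∈ s) : diracCombination t w z s = ENNReal.ofReal (∑ i ∈ t, w i) := by
  rw [diracCombination, finsetSum_apply, ENNReal.ofReal_sum_of_nonneg hw]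
  refine Finset.sum_congr rfl fun i hi => ?_
  rw [smul_apply, dirac_apply_of_mem (hz i hi), smul_eq_mul, mul_one]

theorem integral_diracCombination [MeasurableSingletonClass X] {E : Type*} [NormedAddCommGroup E]
    [NormedSpace ℝ E] [CompleteSpace E] (hw : ∀ i ∈ t, 0 ≤ w i) (f : X → E) :
    ∫ x, f x ∂diracCombination t w z = ∑ i ∈ t, w i • f (z i) := by
  rw [diracCombination, integral_finsetSum_measure]
  · refine Finset.sum_congr rfl fun i hi => ?_
    rw [integral_smul_measure, integral_dirac, ENNReal.toReal_ofReal (hw i hi)]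
  · exact fun i _ => (integrable_dirac enorm_lt_top).smul_measure ENNReal.ofReal_ne_top

end MeasureTheory.Measure

theorem exists_mem_stdSimplex_smul_add_eq [Fintype Ω] {p q : Ω → ℝ} (hp : p ∈ stdSimplex ℝ Ω)
    (hq : q ∈ stdSimplex ℝ Ω) {θ : ℝ} (hθ : 0 < θ) (hle : ∀ ω, (1 - θ) * q ω ≤ p ω) :
    ∃ p' ∈ stdSimplex ℝ Ω, θ • p' + (1 - θ) • q = p := by
  refine ⟨θ⁻¹ • (p - (1 - θ) • q), ⟨fun ω => ?_, ?_⟩, ?_⟩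
  · exact mul_nonneg (inv_nonneg.2 hθ.le) (sub_nonneg.2 (hle ω))
  · simp only [Pi.smul_apply, Pi.sub_apply, smul_eq_mul, ← Finset.mul_sum,
      Finset.sum_sub_distrib, hp.2, hq.2]
    field_simp
    ring
  · rw [smul_smul, mul_inv_cancel₀ hθ.ne', one_smul, sub_add_cancel]

theorem exists_mem_lt_of_mem_closure [Fintype Ω] {s : Set ((Ω → ℝ) × ℝ)} {p : Ω → ℝ} {a : ℝ}
    (h : (p, a) ∈ closure s) {θ b : ℝ} (hθ : 0 < θ) (hb : b < a) :
    ∃ y ∈ s, (∀ ω, 0 < p ω → (1 - θ) * y.1 ω < p ω) ∧ b < y.2 := by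
  have hnear : ∀ᶠ y in 𝓝 (p, a), (∀ ω, 0 < p ω → (1 - θ) * y.1 ω < p ω) ∧ b < y.2 := by
    refine (eventually_all.2 fun ω => ?_).and (continuous_snd.tendsto _ |>.eventually_const_lt hb)
    by_cases hω : 0 < p ω
    · have hcont : Continuous fun y : (Ω → ℝ) × ℝ => (1 - θ) * y.1 ω := by fun_prop
      filter_upwards [hcont.tendsto (p, a) |>.eventually_lt_const (by nlinarith)] with y hy
        using fun _ => hy
    · exact .of_forall fun _ h => absurd h hω
  exact ((mem_closure_iff_frequently.1 h).and_eventually hnear).exists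

structure IsFiniteSplitting [Fintype Ω] (p : Ω → ℝ) {ι : Type*} (t : Finset ι) (w : ι → ℝ)
    (z : ι → Ω → ℝ) : Prop where
  nonneg : ∀ i ∈ t, 0 ≤ w i
  sum_eq_one : ∑ i ∈ t, w i = 1
  mem : ∀ i ∈ t, z i ∈ stdSimplex ℝ Ω
  sum_smul_eq : ∑ i ∈ t, w i • z i = p

namespace IsFiniteSplitting

variable [Fintype Ω] {p : Ω → ℝ} {ι : Type*} {t : Finset ι} {w : ι → ℝ} {z : ι → Ω → ℝ}

theorem single (hp : p ∈ stdSimplex ℝ Ω) :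
    IsFiniteSplitting p (Finset.univ : Finset Unit) 1 fun _ => p :=
  ⟨fun _ _ => zero_le_one, by simp, fun _ _ => hp, by simp⟩

theorem mem_stdSimplex (h : IsFiniteSplitting p t w z) : p ∈ stdSimplex ℝ Ω :=
  h.sum_smul_eq ▸ (convex_stdSimplex ℝ Ω).sum_mem h.nonneg h.sum_eq_one h.mem

theorem mix (h : IsFiniteSplitting p t w z) {p' : Ω → ℝ} (hp' : p' ∈ stdSimplex ℝ Ω) {θ : ℝ}
    (hθ₀ : 0 ≤ θ) (hθ₁ : θ ≤ 1) :
    IsFiniteSplitting (θ • p' + (1 - θ) • p) t.insertNone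
      (fun o => o.elim θ fun i => (1 - θ) * w i) (fun o => o.elim p' z) where
  nonneg
    | none, _ => hθ₀
    | some i, hi => mul_nonneg (sub_nonneg.2 hθ₁) (h.nonneg i (Finset.some_mem_insertNone.1 hi))
  sum_eq_one := by
    simp only [Finset.sum_insertNone, Option.elim_none, Option.elim_some, ← Finset.mul_sum,
      h.sum_eq_one]
    ring
  mem
    | none, _ => hp'
    | some i, hi => h.mem i (Finset.some_mem_insertNone.1 hi)
  sum_smul_eq := by
    rw [Finset.sum_insertNone, ← h.sum_smul_eq, Finset.smul_sum]
    simp only [Option.elim_none, Option.elim_some, smul_smul]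

theorem diracCombination_mem_splittings (h : IsFiniteSplitting p t w z) :
    Measure.diracCombination t w z ∈ Splittings p := by
  have hmass {s : Set (Ω → ℝ)} (hs : ∀ i ∈ t, z i ∈ s) : Measure.diracCombination t w z s = 1 := by
    rw [Measure.diracCombination_apply_of_forall_mem h.nonneg hs, h.sum_eq_one, ENNReal.ofReal_one]
  exact ⟨⟨hmass fun _ _ => mem_univ _⟩, hmass h.mem,
    (Measure.integral_diracCombination h.nonneg id).trans h.sum_smul_eq⟩

end IsFiniteSplitting

theorem nonempty_splittings [Fintype Ω] {p : Ω → ℝ} (hp : p ∈ stdSimplex ℝ Ω) :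
    (Splittings p).Nonempty :=
  ⟨_, (IsFiniteSplitting.single hp).diracCombination_mem_splittings⟩

section Payoff

variable [Fintype Ω] {r : Ω → ℝ} {δ : ℝ} {φ : (Ω → ℝ) → Ω → ℝ} {V : (Ω → ℝ) → ℝ}

theorem measurableSet_stdSimplex : MeasurableSet (stdSimplex ℝ Ω) :=
  (isClosed_stdSimplex ℝ Ω).measurableSet

theorem measurableSet_invest (r : Ω → ℝ) : MeasurableSet (invest r) := by
  have : IsClosed {p : Ω → ℝ | 0 ≤ ∑ ω, p ω * r ω} := isClosed_le continuous_const (by fun_prop)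
  exact measurableSet_stdSimplex.inter this.measurableSet

def posteriorValue (r : Ω → ℝ) (δ : ℝ) (φ : (Ω → ℝ) → Ω → ℝ) (V : (Ω → ℝ) → ℝ) (q : Ω → ℝ) :
    ℝ :=
  (1 - δ) * (invest r).indicator 1 q + δ * V (φ q)

theorem posteriorValue_nonneg (hδ : δ ∈ Icc (0 : ℝ) 1) {q : Ω → ℝ} (hV : 0 ≤ V (φ q)) :
    0 ≤ posteriorValue r δ φ V q :=
  add_nonneg (mul_nonneg (sub_nonneg.2 hδ.2) (indicator_nonneg (fun _ _ => zero_le_one) _))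
    (mul_nonneg hδ.1 hV)

theorem IsFiniteSplitting.dppPayoff_diracCombination {p : Ω → ℝ} {ι : Type*} {t : Finset ι}
    {w : ι → ℝ} {z : ι → Ω → ℝ} (h : IsFiniteSplitting p t w z) :
    dppPayoff r δ φ V (Measure.diracCombination t w z) =
      ∑ i ∈ t, w i * posteriorValue r δ φ V (z i) := by
  have hinvest : (Measure.diracCombination t w z (invest r)).toReal =
      ∑ i ∈ t, w i * (invest r).indicator 1 (z i) := by
    rw [← measureReal_def, ← integral_indicator_one (measurableSet_invest r),
      Measure.integral_diracCombination h.nonneg]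
    rfl
  have hcont : ∫ q in stdSimplex ℝ Ω, V (φ q) ∂Measure.diracCombination t w z =
      ∑ i ∈ t, w i * V (φ (z i)) := by
    rw [← integral_indicator measurableSet_stdSimplex,
      Measure.integral_diracCombination h.nonneg]
    exact Finset.sum_congr rfl fun i hi => by rw [indicator_of_mem (h.mem i hi), smul_eq_mul]
  simp only [dppPayoff, posteriorValue, hinvest, hcont, Finset.mul_sum, mul_add,
    ← Finset.sum_add_distrib]
  exact Finset.sum_congr rfl fun i _ => by ring

end Payoff

namespace Splittings

variable [Fintype Ω] {p : Ω → ℝ} {μ : Measure (Ω → ℝ)}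

theorem ae_mem_stdSimplex (hμ : μ ∈ Splittings p) : ∀ᵐ x ∂μ, x ∈ stdSimplex ℝ Ω := by
  have := hμ.1
  rw [ae_mem_iff_measure_eq measurableSet_stdSimplex.nullMeasurableSet, hμ.2.1, measure_univ]

theorem restrict_stdSimplex (hμ : μ ∈ Splittings p) : μ.restrict (stdSimplex ℝ Ω) = μ :=
  Measure.restrict_eq_self_of_ae_mem (ae_mem_stdSimplex hμ)

theorem integrable_id (hμ : μ ∈ Splittings p) : Integrable (fun x => x) μ := by
  have := hμ.1
  refine Integrable.of_bound measurable_id.aestronglyMeasurable 1 ?_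
  filter_upwards [ae_mem_stdSimplex hμ] with x hx
  simpa using stdSimplex_subset_closedBall hx

theorem mem_stdSimplex (hμ : μ ∈ Splittings p) : p ∈ stdSimplex ℝ Ω := by
  have := hμ.1
  exact hμ.2.2 ▸ (convex_stdSimplex ℝ Ω).integral_mem (isClosed_stdSimplex ℝ Ω)
    (ae_mem_stdSimplex hμ) (integrable_id hμ)

theorem ae_apply_eq_zero (hμ : μ ∈ Splittings p) {ω : Ω} (hω : p ω = 0) :
    ∀ᵐ x ∂μ, x ω = 0 := by
  have hint := (integrable_id hμ).eval
  have hnonneg : 0 ≤ᵐ[μ] fun x => x ω := by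
    filter_upwards [ae_mem_stdSimplex hμ] with x hx using hx.1 ω
  refine (integral_eq_zero_iff_of_nonneg_ae hnonneg (hint ω)).1 ?_
  rw [← eval_integral hint, hμ.2.2, hω]

theorem ae_mem_face (hμ : μ ∈ Splittings p) :
    ∀ᵐ x ∂μ, x ∈ stdSimplex ℝ Ω ∧ ∀ ω, p ω = 0 → x ω = 0 := by
  refine (ae_mem_stdSimplex hμ).and (ae_all_iff.2 fun ω => ?_)
  by_cases hω : p ω = 0
  · filter_upwards [ae_apply_eq_zero hμ hω] with x hx using fun _ => hx
  · exact .of_forall fun _ h => absurd h hω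

variable {r : Ω → ℝ} {δ : ℝ} {φ : (Ω → ℝ) → Ω → ℝ} {V : (Ω → ℝ) → ℝ}

theorem dppPayoff_le (hμ : μ ∈ Splittings p) (hδ : δ ∈ Icc (0 : ℝ) 1) {C : ℝ}
    (hC : ∀ q ∈ stdSimplex ℝ Ω, |V (φ q)| ≤ C) : dppPayoff r δ φ V μ ≤ 1 - δ + δ * C := by
  have := hμ.1
  have hinvest : (μ (invest r)).toReal ≤ 1 := measureReal_le_one
  have hcont : ∫ q in stdSimplex ℝ Ω, V (φ q) ∂μ ≤ C := by
    have := norm_setIntegral_le_of_norm_le_const (measure_lt_top μ _)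
      fun q hq => (Real.norm_eq_abs _).trans_le (hC q hq)
    rw [measureReal_def, hμ.2.1, ENNReal.toReal_one, mul_one] at this
    exact (le_abs_self _).trans this
  have h₁ := mul_le_mul_of_nonneg_left hinvest (sub_nonneg.2 hδ.2)
  have h₂ := mul_le_mul_of_nonneg_left hcont hδ.1
  rw [dppPayoff]
  linarith

theorem mem_closure_convexHull (hμ : μ ∈ Splittings p) (hδ : 0 ≤ δ)
    (hV : ∀ q ∈ stdSimplex ℝ Ω, 0 ≤ V (φ q)) :
    (p, dppPayoff r δ φ V μ) ∈ closure (convexHull ℝ {y : (Ω → ℝ) × ℝ |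
      (y.1 ∈ stdSimplex ℝ Ω ∧ ∀ ω, p ω = 0 → y.1 ω = 0) ∧ y.2 ≤ posteriorValue r δ φ V y.1}) := by
  classical
  have := hμ.1
  -- If `V ∘ φ` is not integrable, its integral is the junk value `0`, matched by `g = 0`.
  set g : (Ω → ℝ) → ℝ :=
    if Integrable (fun q => V (φ q)) μ then fun q => V (φ q) else 0 with hg
  have hg_int : Integrable g μ := by
    rw [hg]; split_ifs with h
    exacts [h, integrable_zero _ _ _]
  have hg_integral : ∫ q, g q ∂μ = ∫ q, V (φ q) ∂μ := by
    rw [hg]; split_ifs with h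
    · rfl
    · rw [integral_undef h, Pi.zero_def, integral_zero]
  have hg_le : ∀ q ∈ stdSimplex ℝ Ω, g q ≤ V (φ q) := by
    intro q hq; rw [hg]; split_ifs
    exacts [le_rfl, hV q hq]
  have hind : Integrable ((invest r).indicator (1 : (Ω → ℝ) → ℝ)) μ :=
    (integrable_const 1).indicator (measurableSet_invest r)
  have hpay_int : Integrable (fun x => (1 - δ) * (invest r).indicator 1 x + δ * g x) μ :=
    (hind.const_mul _).add (hg_int.const_mul _)
  have hintegral : ∫ x, (x, (1 - δ) * (invest r).indicator 1 x + δ * g x) ∂μ =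
      (p, dppPayoff r δ φ V μ) := by
    rw [integral_pair (integrable_id hμ) hpay_int, integral_add (hind.const_mul _)
      (hg_int.const_mul _), integral_const_mul, integral_const_mul,
      integral_indicator_one (measurableSet_invest r), hg_integral, hμ.2.2, dppPayoff,
      restrict_stdSimplex hμ, measureReal_def]
  rw [← hintegral]
  refine (convex_convexHull ℝ _).closure.integral_mem isClosed_closure ?_
    ((integrable_id hμ).prodMk hpay_int)
  filter_upwards [ae_mem_face hμ] with x hx
  refine subset_closure (subset_convexHull ℝ _ ⟨hx, ?_⟩)
  exact add_le_add_right (mul_le_mul_of_nonneg_left (hg_le x hx.1) hδ) _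

theorem exists_isFiniteSplitting_le (hμ : μ ∈ Splittings p) (hδ : δ ∈ Icc (0 : ℝ) 1)
    (hV : ∀ q ∈ stdSimplex ℝ Ω, V (φ q) ∈ Icc (0 : ℝ) 1) {ε : ℝ} (hε : 0 < ε) :
    ∃ (ι : Type) (t : Finset ι) (w : ι → ℝ) (z : ι → Ω → ℝ), IsFiniteSplitting p t w z ∧
      dppPayoff r δ φ V μ - ε ≤ ∑ i ∈ t, w i * posteriorValue r δ φ V (z i) := by
  set θ := min (ε / 2) 1
  have hθ₀ : 0 < θ := lt_min (half_pos hε) one_pos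
  obtain ⟨y, hy, hy_fst, hy_snd⟩ := exists_mem_lt_of_mem_closure
    (mem_closure_convexHull (r := r) hμ hδ.1 fun q hq => (hV q hq).1) hθ₀
    (sub_lt_self _ (half_pos hε))
  rw [convexHull_eq] at hy
  obtain ⟨ι, t, w, z, hw₀, hw₁, hz, rfl⟩ := hy
  rw [Finset.centerMass_eq_of_sum_1 _ _ hw₁, Prod.fst_sum] at hy_fst
  rw [Finset.centerMass_eq_of_sum_1 _ _ hw₁, Prod.snd_sum] at hy_snd
  simp only [Prod.smul_fst, Prod.smul_snd, smul_eq_mul] at hy_fst hy_snd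
  have hq : IsFiniteSplitting (∑ i ∈ t, w i • (z i).1) t w fun i => (z i).1 :=
    ⟨hw₀, hw₁, fun i hi => (hz i hi).1.1, rfl⟩
  have hle : ∀ ω, (1 - θ) * (∑ i ∈ t, w i • (z i).1) ω ≤ p ω := by
    intro ω
    rcases (mem_stdSimplex hμ).1 ω |>.lt_or_eq with hω | hω
    · exact (hy_fst ω hω).le
    · have : (∑ i ∈ t, w i • (z i).1) ω = 0 := by
        rw [Finset.sum_apply]
        exact Finset.sum_eq_zero fun i hi => by simp [(hz i hi).1.2 ω hω.symm]
      rw [this, mul_zero, ← hω]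
  obtain ⟨p', hp', hmix⟩ :=
    exists_mem_stdSimplex_smul_add_eq (mem_stdSimplex hμ) hq.mem_stdSimplex hθ₀ hle
  refine ⟨Option ι, _, _, _, hmix ▸ hq.mix hp' hθ₀.le (min_le_right _ _), ?_⟩
  have hpayoff : dppPayoff r δ φ V μ ≤ 1 := by
    simpa using dppPayoff_le hμ hδ fun q hq => abs_le.2 ⟨by linarith [(hV q hq).1], (hV q hq).2⟩
  have hp'_val := posteriorValue_nonneg (r := r) hδ (hV p' hp').1
  have hsum : ∑ i ∈ t, w i * (z i).2 ≤ ∑ i ∈ t, w i * posteriorValue r δ φ V (z i).1 :=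
    Finset.sum_le_sum fun i hi => mul_le_mul_of_nonneg_left (hz i hi).2 (hw₀ i hi)
  have hmix_le := mul_le_mul_of_nonneg_left (hy_snd.le.trans hsum)
    (sub_nonneg.2 (min_le_right (ε / 2) 1))
  have hθε : θ ≤ ε / 2 := min_le_left _ _
  simp only [Finset.sum_insertNone, Option.elim_none, Option.elim_some, mul_assoc,
    ← Finset.mul_sum]
  nlinarith

end Splittings

theorem nonpos_of_forall_le_mul {α : Type*} {s : Set α} {f : α → ℝ} (hbdd : BddAbove (f '' s))
    {δ : ℝ} (hδ : δ < 1) (h : ∀ M, (∀ x ∈ s, f x ≤ M) → ∀ x ∈ s, f x ≤ δ * M) :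
    ∀ x ∈ s, f x ≤ 0 := by
  intro x hx
  have hle : ∀ y ∈ s, f y ≤ sSup (f '' s) := fun y hy => le_csSup hbdd (mem_image_of_mem f hy)
  have hsup : sSup (f '' s) ≤ δ * sSup (f '' s) :=
    csSup_le ⟨f x, mem_image_of_mem f hx⟩ (forall_mem_image.2 (h _ hle))
  nlinarith [hle x hx]

namespace SatisfiesDPP

variable [Fintype Ω] {r : Ω → ℝ} {δ : ℝ} {φ : (Ω → ℝ) → Ω → ℝ} {V W : (Ω → ℝ) → ℝ} {C : ℝ}
  {p : Ω → ℝ}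

theorem dppPayoff_le (hV : SatisfiesDPP r δ φ V) (hδ : δ ∈ Icc (0 : ℝ) 1)
    (hφ : MapsTo φ (stdSimplex ℝ Ω) (stdSimplex ℝ Ω)) (hC : ∀ q ∈ stdSimplex ℝ Ω, |V q| ≤ C)
    (hp : p ∈ stdSimplex ℝ Ω) {μ : Measure (Ω → ℝ)} (hμ : μ ∈ Splittings p) :
    dppPayoff r δ φ V μ ≤ V p := by
  rw [hV p hp]
  refine le_csSup ⟨1 - δ + δ * C, forall_mem_image.2 fun ν hν => ?_⟩ (mem_image_of_mem _ hμ)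
  exact Splittings.dppPayoff_le hν hδ fun q hq => hC _ (hφ hq)

theorem sum_posteriorValue_le (hV : SatisfiesDPP r δ φ V) (hδ : δ ∈ Icc (0 : ℝ) 1)
    (hφ : MapsTo φ (stdSimplex ℝ Ω) (stdSimplex ℝ Ω)) (hC : ∀ q ∈ stdSimplex ℝ Ω, |V q| ≤ C)
    {ι : Type*} {t : Finset ι} {w : ι → ℝ} {z : ι → Ω → ℝ} (h : IsFiniteSplitting p t w z) :
    ∑ i ∈ t, w i * posteriorValue r δ φ V (z i) ≤ V p :=
  h.dppPayoff_diracCombination ▸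
    hV.dppPayoff_le hδ hφ hC h.mem_stdSimplex h.diracCombination_mem_splittings

theorem le_of_forall_dppPayoff_le (hV : SatisfiesDPP r δ φ V) (hp : p ∈ stdSimplex ℝ Ω) {c : ℝ}
    (h : ∀ μ ∈ Splittings p, dppPayoff r δ φ V μ ≤ c) : V p ≤ c := by
  rw [hV p hp]
  exact csSup_le ((nonempty_splittings hp).image _) (forall_mem_image.2 h)

theorem exists_lt_dppPayoff (hV : SatisfiesDPP r δ φ V) (hp : p ∈ stdSimplex ℝ Ω) {a : ℝ}
    (ha : a < V p) : ∃ μ ∈ Splittings p, a < dppPayoff r δ φ V μ := by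
  rw [hV p hp] at ha
  obtain ⟨_, ⟨μ, hμ, rfl⟩, hlt⟩ := exists_lt_of_lt_csSup ((nonempty_splittings hp).image _) ha
  exact ⟨μ, hμ, hlt⟩

theorem nonneg (hV : SatisfiesDPP r δ φ V) (hδ : δ ∈ Ico (0 : ℝ) 1)
    (hφ : MapsTo φ (stdSimplex ℝ Ω) (stdSimplex ℝ Ω)) (hC : ∀ q ∈ stdSimplex ℝ Ω, |V q| ≤ C) :
    ∀ p ∈ stdSimplex ℝ Ω, 0 ≤ V p := by
  have hbdd : BddAbove ((fun q => -V q) '' stdSimplex ℝ Ω) :=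
    ⟨C, forall_mem_image.2 fun q hq => (neg_le_abs _).trans (hC q hq)⟩
  have hcontract : ∀ M, (∀ q ∈ stdSimplex ℝ Ω, -V q ≤ M) →
      ∀ p ∈ stdSimplex ℝ Ω, -V p ≤ δ * M := by
    intro M hM p hp
    have hval := hV.sum_posteriorValue_le (Ico_subset_Icc_self hδ) hφ hC (.single hp)
    simp only [Finset.univ_unique, Finset.sum_singleton, Pi.one_apply, one_mul,
      posteriorValue] at hval
    have hind : 0 ≤ (1 - δ) * (invest r).indicator 1 p :=
      mul_nonneg (sub_nonneg.2 hδ.2.le) (indicator_nonneg (fun _ _ => zero_le_one) _)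
    nlinarith [hM _ (hφ hp), hδ.1]
  exact fun p hp => neg_nonpos.1 (nonpos_of_forall_le_mul hbdd hδ.2 hcontract p hp)

theorem le_one (hV : SatisfiesDPP r δ φ V) (hδ : δ ∈ Ico (0 : ℝ) 1)
    (hφ : MapsTo φ (stdSimplex ℝ Ω) (stdSimplex ℝ Ω)) (hC : ∀ q ∈ stdSimplex ℝ Ω, |V q| ≤ C) :
    ∀ p ∈ stdSimplex ℝ Ω, V p ≤ 1 := by
  have hbdd : BddAbove ((fun q => V q - 1) '' stdSimplex ℝ Ω) :=
    ⟨C - 1, forall_mem_image.2 fun q hq => by linarith [le_abs_self (V q), hC q hq]⟩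
  have hnonneg := hV.nonneg hδ hφ hC
  have hcontract : ∀ M, (∀ q ∈ stdSimplex ℝ Ω, V q - 1 ≤ M) →
      ∀ p ∈ stdSimplex ℝ Ω, V p - 1 ≤ δ * M := by
    intro M hM p hp
    have hbound : ∀ q ∈ stdSimplex ℝ Ω, |V (φ q)| ≤ M + 1 := fun q hq =>
      abs_le.2 ⟨by linarith [hnonneg _ (hφ hq), hnonneg p hp, hM p hp], by linarith [hM _ (hφ hq)]⟩
    have := hV.le_of_forall_dppPayoff_le hp fun μ hμ =>
      Splittings.dppPayoff_le hμ (Ico_subset_Icc_self hδ) hbound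
    linarith
  exact fun p hp => sub_nonpos.1 (nonpos_of_forall_le_mul hbdd hδ.2 hcontract p hp)

theorem exists_isFiniteSplitting_lt (hV : SatisfiesDPP r δ φ V) (hδ : δ ∈ Ico (0 : ℝ) 1)
    (hφ : MapsTo φ (stdSimplex ℝ Ω) (stdSimplex ℝ Ω)) (hC : ∀ q ∈ stdSimplex ℝ Ω, |V q| ≤ C)
    (hp : p ∈ stdSimplex ℝ Ω) {ε : ℝ} (hε : 0 < ε) :
    ∃ (ι : Type) (t : Finset ι) (w : ι → ℝ) (z : ι → Ω → ℝ), IsFiniteSplitting p t w z ∧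
      V p - ε < ∑ i ∈ t, w i * posteriorValue r δ φ V (z i) := by
  obtain ⟨μ, hμ, hlt⟩ := hV.exists_lt_dppPayoff hp (sub_lt_self (V p) (half_pos hε))
  have hV01 : ∀ q ∈ stdSimplex ℝ Ω, V (φ q) ∈ Icc (0 : ℝ) 1 := fun q hq =>
    ⟨hV.nonneg hδ hφ hC _ (hφ hq), hV.le_one hδ hφ hC _ (hφ hq)⟩
  obtain ⟨ι, t, w, z, hs, hle⟩ :=
    Splittings.exists_isFiniteSplitting_le (r := r) hμ (Ico_subset_Icc_self hδ) hV01 (half_pos hε)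
  exact ⟨ι, t, w, z, hs, by linarith⟩

theorem posteriorValue_sub (q : Ω → ℝ) :
    posteriorValue r δ φ V q - posteriorValue r δ φ W q = δ * (V (φ q) - W (φ q)) := by
  unfold posteriorValue
  ring

theorem sub_le_mul (hV : SatisfiesDPP r δ φ V) (hW : SatisfiesDPP r δ φ W)
    (hδ : δ ∈ Ico (0 : ℝ) 1) (hφ : MapsTo φ (stdSimplex ℝ Ω) (stdSimplex ℝ Ω))
    (hCV : ∀ q ∈ stdSimplex ℝ Ω, |V q| ≤ C) {D : ℝ} (hDW : ∀ q ∈ stdSimplex ℝ Ω, |W q| ≤ D)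
    {M : ℝ} (hM : ∀ q ∈ stdSimplex ℝ Ω, V q - W q ≤ M) :
    ∀ p ∈ stdSimplex ℝ Ω, V p - W p ≤ δ * M := by
  intro p hp
  refine le_of_forall_pos_lt_add fun ε hε => ?_
  obtain ⟨ι, t, w, z, hs, hlt⟩ := hV.exists_isFiniteSplitting_lt hδ hφ hCV hp hε
  have hW_le := hW.sum_posteriorValue_le (Ico_subset_Icc_self hδ) hφ hDW hs
  have hdiff : ∑ i ∈ t, w i * posteriorValue r δ φ V (z i) -
      ∑ i ∈ t, w i * posteriorValue r δ φ W (z i) ≤ δ * M :=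
    calc _ = ∑ i ∈ t, w i * (δ * (V (φ (z i)) - W (φ (z i)))) := by
          simp only [← Finset.sum_sub_distrib, ← mul_sub, posteriorValue_sub]
      _ ≤ ∑ i ∈ t, w i * (δ * M) := Finset.sum_le_sum fun i hi =>
          mul_le_mul_of_nonneg_left
            (mul_le_mul_of_nonneg_left (hM _ (hφ (hs.mem i hi))) hδ.1) (hs.nonneg i hi)
      _ = δ * M := by rw [← Finset.sum_mul, hs.sum_eq_one, one_mul]
  linarith

theorem le (hV : SatisfiesDPP r δ φ V) (hW : SatisfiesDPP r δ φ W) (hδ : δ ∈ Ico (0 : ℝ) 1)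
    (hφ : MapsTo φ (stdSimplex ℝ Ω) (stdSimplex ℝ Ω)) (hCV : ∀ q ∈ stdSimplex ℝ Ω, |V q| ≤ C)
    {D : ℝ} (hDW : ∀ q ∈ stdSimplex ℝ Ω, |W q| ≤ D) : ∀ p ∈ stdSimplex ℝ Ω, V p ≤ W p := by
  have hbdd : BddAbove ((fun q => V q - W q) '' stdSimplex ℝ Ω) :=
    ⟨C + D, forall_mem_image.2 fun q hq => by
      linarith [le_abs_self (V q), neg_le_abs (W q), hCV q hq, hDW q hq]⟩
  exact fun p hp => sub_nonpos.1 <| nonpos_of_forall_le_mul hbdd hδ.2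
    (fun _ hM => hV.sub_le_mul hW hδ hφ hCV hDW hM) p hp

end SatisfiesDPP

theorem dpp_unique_general [Fintype Ω]
    (r : Ω → ℝ) (δ : ℝ) (hδ : δ ∈ Ico (0 : ℝ) 1)
    (φ : (Ω → ℝ) → Ω → ℝ)
    (hφmaps : MapsTo φ (stdSimplex ℝ Ω) (stdSimplex ℝ Ω))
    (V₁ V₂ : (Ω → ℝ) → ℝ)
    (h₁b : ∃ C, ∀ p ∈ stdSimplex ℝ Ω, |V₁ p| ≤ C)
    (h₂b : ∃ C, ∀ p ∈ stdSimplex ℝ Ω, |V₂ p| ≤ C)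
    (h₁ : SatisfiesDPP r δ φ V₁) (h₂ : SatisfiesDPP r δ φ V₂) :
    ∀ p ∈ stdSimplex ℝ Ω, V₁ p = V₂ p := by
  obtain ⟨C₁, hC₁⟩ := h₁b
  obtain ⟨C₂, hC₂⟩ := h₂b
  exact fun p hp => le_antisymm (h₁.le h₂ hδ hφmaps hC₁ hC₂ p hp) (h₂.le h₁ hδ hφmaps hC₂ hC₁ p hp)

/-- the dynamic programming equation has at most one bounded solution. -/
theorem dpp_unique [Fintype Ω] [Nonempty Ω]
    (r : Ω → ℝ) (δ : ℝ) (hδ : δ ∈ Ico (0 : ℝ) 1)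
    (φ : (Ω → ℝ) → Ω → ℝ)
    (hφmaps : MapsTo φ (stdSimplex ℝ Ω) (stdSimplex ℝ Ω))
    (hφcont : ContinuousOn φ (stdSimplex ℝ Ω))
    (hφaff : ∀ x ∈ stdSimplex ℝ Ω, ∀ y ∈ stdSimplex ℝ Ω, ∀ t ∈ Icc (0 : ℝ) 1,
      φ (t • x + (1 - t) • y) = t • φ x + (1 - t) • φ y)
    (V₁ V₂ : (Ω → ℝ) → ℝ)
    (h₁b : ∃ C, ∀ p ∈ stdSimplex ℝ Ω, |V₁ p| ≤ C)
    (h₂b : ∃ C, ∀ p ∈ stdSimplex ℝ Ω, |V₂ p| ≤ C)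
    (h₁ : SatisfiesDPP r δ φ V₁) (h₂ : SatisfiesDPP r δ φ V₂) :
    ∀ p ∈ stdSimplex ℝ Ω, V₁ p = V₂ p :=
  dpp_unique_general r δ hδ φ hφmaps V₁ V₂ h₁b h₂b h₁ h₂

end
end

section
/- Every bounded function V : Δ(Ω) → ℝ that satisfies the dynamic programming equation is concave on Δ(Ω). -/
open MeasureTheory Set

noncomputable section

variable {Ω : Type*}

/-!
Mixing a splitting of `x` and a splitting of `y` with weights `a`, `b` gives a splitting of
`a • x + b • y` whose payoff is the same mixture of payoffs, so the dynamic programming equation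
yields concavity as soon as its supremum may be restricted to splittings along which `V ∘ φ` is
integrable (for the others the Bochner integral is `0` and the payoff is not affine).
Dirac splittings give `δ * V (φ p) ≤ V p`, which together with boundedness and `δ < 1` forces
`V ≥ 0`. Hence a splitting with non-integrable `V ∘ φ` is dominated by the two-point splitting
at the barycenters of its restrictions to `I` and to the complement of `I`.
-/
open Filter Topology

theorem exists_mem_measureReal_smul_eq_integral {α E : Type*} [MeasurableSpace α]
    [NormedAddCommGroup E] [NormedSpace ℝ E] [CompleteSpace E] {μ : Measure α} [IsFiniteMeasure μ]
    {K : Set E} {f : α → E} (hKc : Convex ℝ K) (hKcl : IsClosed K) (hKne : K.Nonempty)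
    (hfK : ∀ᵐ a ∂μ, f a ∈ K) (hf : Integrable f μ) :
    ∃ x ∈ K, μ.real univ • x = ∫ a, f a ∂μ := by
  rcases eq_zero_or_neZero μ with rfl | _
  · obtain ⟨x, hx⟩ := hKne
    exact ⟨x, hx, by simp⟩
  · exact ⟨_, hKc.average_mem hKcl hfK hf, measure_smul_average μ f⟩

theorem nonneg_of_mul_apply_comp_le {X : Type*} {s : Set X} {f : X → ℝ} {g : X → X} {δ C : ℝ}
    (hδ : δ ∈ Ico (0 : ℝ) 1) (hg : MapsTo g s s) (hfC : ∀ x ∈ s, -C ≤ f x)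
    (hf : ∀ x ∈ s, δ * f (g x) ≤ f x) {x : X} (hx : x ∈ s) : 0 ≤ f x := by
  have hpow : ∀ n : ℕ, ∀ x ∈ s, -(δ ^ n * C) ≤ f x := by
    intro n
    induction n with
    | zero => simpa using hfC
    | succ n ih =>
      intro x hx
      calc -(δ ^ (n + 1) * C) = δ * -(δ ^ n * C) := by ring
        _ ≤ δ * f (g x) := mul_le_mul_of_nonneg_left (ih _ (hg hx)) hδ.1
        _ ≤ f x := hf x hx
  have hlim : Tendsto (fun n : ℕ => -(δ ^ n * C)) atTop (𝓝 0) := by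
    simpa using ((tendsto_pow_atTop_nhds_zero_of_lt_one hδ.1 hδ.2).mul_const C).neg
  exact le_of_tendsto' hlim fun n => hpow n x hx

section

variable [Fintype Ω]

theorem isClosed_invest (r : Ω → ℝ) : IsClosed (invest r) :=
  (isClosed_stdSimplex ℝ Ω).inter
    (isClosed_le continuous_const (by fun_prop) : IsClosed {p : Ω → ℝ | 0 ≤ ∑ ω, p ω * r ω})

theorem convex_invest (r : Ω → ℝ) : Convex ℝ (invest r) := by
  refine (convex_stdSimplex ℝ Ω).inter
    (convex_halfSpace_ge (f := fun p : Ω → ℝ => ∑ ω, p ω * r ω) ⟨fun u v => ?_, fun c u => ?_⟩ 0)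
  · simp [add_mul, Finset.sum_add_distrib]
  · simp [Finset.mul_sum, mul_assoc]

theorem invest_subset_stdSimplex (r : Ω → ℝ) : invest r ⊆ stdSimplex ℝ Ω := fun _ hp => hp.1

section Splittings

variable {p x y : Ω → ℝ} {μ ν : Measure (Ω → ℝ)}

theorem dirac_mem_splittings (hp : p ∈ stdSimplex ℝ Ω) : Measure.dirac p ∈ Splittings p :=
  ⟨inferInstance, Measure.dirac_apply_of_mem hp, integral_dirac _ p⟩

theorem ae_mem_stdSimplex_of_mem_splittings (hμ : μ ∈ Splittings p) :
    ∀ᵐ q ∂μ, q ∈ stdSimplex ℝ Ω :=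
  have := hμ.1
  mem_ae_iff.2 <| (prob_compl_eq_zero_iff (isClosed_stdSimplex ℝ Ω).measurableSet).2 hμ.2.1

theorem integrable_id_of_mem_splittings (hμ : μ ∈ Splittings p) : Integrable (fun q => q) μ := by
  have := hμ.1
  have h := continuous_id.continuousOn.integrableOn_compact (μ := μ) (isCompact_stdSimplex ℝ Ω)
  rwa [IntegrableOn, Measure.restrict_eq_self_of_ae_mem
    (ae_mem_stdSimplex_of_mem_splittings hμ)] at h

theorem smul_add_smul_mem_splittings (hμ : μ ∈ Splittings x) (hν : ν ∈ Splittings y)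
    {a b : ℝ} (ha : 0 ≤ a) (hb : 0 ≤ b) (hab : a + b = 1) :
    ENNReal.ofReal a • μ + ENNReal.ofReal b • ν ∈ Splittings (a • x + b • y) := by
  have hμi := (integrable_id_of_mem_splittings hμ).smul_measure (ENNReal.ofReal_ne_top (r := a))
  have hνi := (integrable_id_of_mem_splittings hν).smul_measure (ENNReal.ofReal_ne_top (r := b))
  obtain ⟨hμp, hμs, hμb⟩ := hμ
  obtain ⟨hνp, hνs, hνb⟩ := hν
  have hsum : ENNReal.ofReal a + ENNReal.ofReal b = 1 := by
    rw [← ENNReal.ofReal_add ha hb, hab, ENNReal.ofReal_one]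
  refine ⟨⟨by simp [hsum]⟩, by simp [hμs, hνs, hsum], ?_⟩
  rw [integral_add_measure hμi hνi, integral_smul_measure, integral_smul_measure, hμb, hνb,
    ENNReal.toReal_ofReal ha, ENNReal.toReal_ofReal hb]

theorem exists_smul_dirac_add_smul_dirac_mem_splittings {s : Set (Ω → ℝ)} (hsc : Convex ℝ s)
    (hscl : IsClosed s) (hsne : s.Nonempty) (hs : s ⊆ stdSimplex ℝ Ω)
    (hp : p ∈ stdSimplex ℝ Ω) (hμ : μ ∈ Splittings p) :
    ∃ x₁ ∈ s, ∃ x₂ ∈ stdSimplex ℝ Ω, ENNReal.ofReal (μ.real s) • Measure.dirac x₁ +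
      ENNReal.ofReal (μ.real sᶜ) • Measure.dirac x₂ ∈ Splittings p := by
  have := hμ.1
  have hid := integrable_id_of_mem_splittings hμ
  obtain ⟨x₁, hx₁, hx₁eq⟩ := exists_mem_measureReal_smul_eq_integral (μ := μ.restrict s)
    hsc hscl hsne (ae_restrict_mem hscl.measurableSet) hid.restrict
  obtain ⟨x₂, hx₂, hx₂eq⟩ := exists_mem_measureReal_smul_eq_integral
    (μ := μ.restrict sᶜ) (convex_stdSimplex ℝ Ω) (isClosed_stdSimplex ℝ Ω) ⟨p, hp⟩
    (ae_restrict_of_ae (ae_mem_stdSimplex_of_mem_splittings hμ)) hid.restrict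
  rw [measureReal_restrict_apply_univ] at hx₁eq hx₂eq
  have hsum : μ.real s + μ.real sᶜ = 1 := by
    rw [measureReal_add_measureReal_compl hscl.measurableSet, probReal_univ]
  have hbar : μ.real s • x₁ + μ.real sᶜ • x₂ = p := by
    rw [hx₁eq, hx₂eq, integral_add_compl hscl.measurableSet hid, hμ.2.2]
  exact ⟨x₁, hx₁, x₂, hx₂, hbar ▸ smul_add_smul_mem_splittings (dirac_mem_splittings (hs hx₁))
    (dirac_mem_splittings hx₂) measureReal_nonneg measureReal_nonneg hsum⟩

end Splittings

section Payoff

variable {r : Ω → ℝ} {δ : ℝ} {φ : (Ω → ℝ) → Ω → ℝ} {V : (Ω → ℝ) → ℝ} {p : Ω → ℝ}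
  {μ ν : Measure (Ω → ℝ)}

theorem dppPayoff_dirac (hp : p ∈ stdSimplex ℝ Ω) :
    dppPayoff r δ φ V (Measure.dirac p) =
      (1 - δ) * (Measure.dirac p (invest r)).toReal + δ * V (φ p) := by
  classical
  rw [dppPayoff, setIntegral_dirac, if_pos hp]

theorem dppPayoff_smul_add_smul [IsFiniteMeasure μ] [IsFiniteMeasure ν] {a b : ℝ}
    (ha : 0 ≤ a) (hb : 0 ≤ b)
    (hμ : IntegrableOn (fun q => V (φ q)) (stdSimplex ℝ Ω) μ)
    (hν : IntegrableOn (fun q => V (φ q)) (stdSimplex ℝ Ω) ν) :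
    dppPayoff r δ φ V (ENNReal.ofReal a • μ + ENNReal.ofReal b • ν) =
      a * dppPayoff r δ φ V μ + b * dppPayoff r δ φ V ν := by
  have hmeas : ((ENNReal.ofReal a • μ + ENNReal.ofReal b • ν) (invest r)).toReal =
      a * (μ (invest r)).toReal + b * (ν (invest r)).toReal := by
    rw [Measure.add_apply, Measure.smul_apply, Measure.smul_apply, smul_eq_mul, smul_eq_mul,
      ENNReal.toReal_add (by finiteness) (by finiteness), ENNReal.toReal_mul, ENNReal.toReal_mul,
      ENNReal.toReal_ofReal ha, ENNReal.toReal_ofReal hb]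
  have hint : ∫ q in stdSimplex ℝ Ω, V (φ q) ∂(ENNReal.ofReal a • μ + ENNReal.ofReal b • ν) =
      a * ∫ q in stdSimplex ℝ Ω, V (φ q) ∂μ + b * ∫ q in stdSimplex ℝ Ω, V (φ q) ∂ν := by
    rw [Measure.restrict_add, Measure.restrict_smul, Measure.restrict_smul,
      integral_add_measure (hμ.smul_measure ENNReal.ofReal_ne_top)
        (hν.smul_measure ENNReal.ofReal_ne_top),
      integral_smul_measure, integral_smul_measure, ENNReal.toReal_ofReal ha,
      ENNReal.toReal_ofReal hb, smul_eq_mul, smul_eq_mul]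
  rw [dppPayoff, dppPayoff, dppPayoff, hmeas, hint]
  ring

theorem dppPayoff_le_of_mem_splittings (hδ : δ ∈ Icc (0 : ℝ) 1)
    (hφ : MapsTo φ (stdSimplex ℝ Ω) (stdSimplex ℝ Ω)) {C : ℝ}
    (hC : ∀ p ∈ stdSimplex ℝ Ω, |V p| ≤ C) (hμ : μ ∈ Splittings p) :
    dppPayoff r δ φ V μ ≤ (1 - δ) + δ * C := by
  obtain ⟨hμp, hμs, -⟩ := hμ
  have hI : (μ (invest r)).toReal ≤ 1 := measureReal_le_one
  have hV : ∫ q in stdSimplex ℝ Ω, V (φ q) ∂μ ≤ C := by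
    have h := norm_setIntegral_le_of_norm_le_const (μ := μ) (f := fun q => V (φ q))
      (by simp [hμs]) fun q hq => hC _ (hφ hq)
    rw [measureReal_def, hμs, ENNReal.toReal_one, mul_one] at h
    exact (le_abs_self _).trans h
  have h1δ : 0 ≤ 1 - δ := sub_nonneg.2 hδ.2
  calc dppPayoff r δ φ V μ ≤ (1 - δ) * 1 + δ * C :=
        add_le_add (mul_le_mul_of_nonneg_left hI h1δ) (mul_le_mul_of_nonneg_left hV hδ.1)
    _ = (1 - δ) + δ * C := by ring

theorem bddAbove_dppPayoff_image (hδ : δ ∈ Icc (0 : ℝ) 1)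
    (hφ : MapsTo φ (stdSimplex ℝ Ω) (stdSimplex ℝ Ω)) {C : ℝ}
    (hC : ∀ p ∈ stdSimplex ℝ Ω, |V p| ≤ C) (p : Ω → ℝ) :
    BddAbove (dppPayoff r δ φ V '' Splittings p) := by
  refine ⟨(1 - δ) + δ * C, ?_⟩
  rintro _ ⟨μ, hμ, rfl⟩
  exact dppPayoff_le_of_mem_splittings hδ hφ hC hμ

end Payoff

section DynamicProgramming

variable {r : Ω → ℝ} {δ : ℝ} {φ : (Ω → ℝ) → Ω → ℝ} {V : (Ω → ℝ) → ℝ} {p x y : Ω → ℝ}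
  {μ ν : Measure (Ω → ℝ)}

theorem SatisfiesDPP.dppPayoff_le_s1 (hV : SatisfiesDPP r δ φ V)
    (hbdd : BddAbove (dppPayoff r δ φ V '' Splittings p)) (hp : p ∈ stdSimplex ℝ Ω)
    (hμ : μ ∈ Splittings p) : dppPayoff r δ φ V μ ≤ V p := by
  rw [hV p hp]
  exact le_csSup hbdd ⟨μ, hμ, rfl⟩

theorem SatisfiesDPP.mul_apply_comp_le (hV : SatisfiesDPP r δ φ V)
    (hbdd : BddAbove (dppPayoff r δ φ V '' Splittings p)) (hδ : δ ≤ 1)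
    (hp : p ∈ stdSimplex ℝ Ω) : δ * V (φ p) ≤ V p := by
  have h := hV.dppPayoff_le_s1 hbdd hp (dirac_mem_splittings hp)
  rw [dppPayoff_dirac hp] at h
  have : 0 ≤ (1 - δ) * (Measure.dirac p (invest r)).toReal :=
    mul_nonneg (sub_nonneg.2 hδ) ENNReal.toReal_nonneg
  linarith

theorem SatisfiesDPP.nonneg_s1 (hV : SatisfiesDPP r δ φ V) (hδ : δ ∈ Ico (0 : ℝ) 1)
    (hφ : MapsTo φ (stdSimplex ℝ Ω) (stdSimplex ℝ Ω)) {C : ℝ}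
    (hC : ∀ p ∈ stdSimplex ℝ Ω, |V p| ≤ C) (hp : p ∈ stdSimplex ℝ Ω) : 0 ≤ V p :=
  nonneg_of_mul_apply_comp_le hδ hφ (fun q hq => neg_le_of_abs_le (hC q hq))
    (fun q hq => hV.mul_apply_comp_le
      (bddAbove_dppPayoff_image (Ico_subset_Icc_self hδ) hφ hC q) hδ.2.le hq) hp

theorem exists_integrableOn_dppPayoff_ge (hδ : δ ∈ Icc (0 : ℝ) 1)
    (hVφ : ∀ q ∈ stdSimplex ℝ Ω, 0 ≤ V (φ q)) (hp : p ∈ stdSimplex ℝ Ω)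
    (hμ : μ ∈ Splittings p) :
    ∃ μ' ∈ Splittings p, IntegrableOn (fun q => V (φ q)) (stdSimplex ℝ Ω) μ' ∧
      dppPayoff r δ φ V μ ≤ dppPayoff r δ φ V μ' := by
  by_cases hint : IntegrableOn (fun q => V (φ q)) (stdSimplex ℝ Ω) μ
  · exact ⟨μ, hμ, hint, le_rfl⟩
  have hbad : dppPayoff r δ φ V μ = (1 - δ) * μ.real (invest r) := by
    rw [dppPayoff, integral_undef hint, mul_zero, add_zero, measureReal_def]
  have h1δ : 0 ≤ 1 - δ := sub_nonneg.2 hδ.2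
  have hdirac (x : Ω → ℝ) : Integrable (fun q => V (φ q)) (Measure.dirac x) :=
    integrable_dirac enorm_lt_top
  rcases (invest r).eq_empty_or_nonempty with hI | hI
  · refine ⟨Measure.dirac p, dirac_mem_splittings hp, (hdirac p).integrableOn, ?_⟩
    rw [hbad, hI, measureReal_empty, mul_zero, dppPayoff_dirac hp]
    exact add_nonneg (mul_nonneg h1δ ENNReal.toReal_nonneg) (mul_nonneg hδ.1 (hVφ p hp))
  obtain ⟨x₁, hx₁, x₂, hx₂, hμ'⟩ :=
    exists_smul_dirac_add_smul_dirac_mem_splittings (convex_invest r) (isClosed_invest r) hI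
      (invest_subset_stdSimplex r) hp hμ
  have hx₁s := invest_subset_stdSimplex r hx₁
  set a := μ.real (invest r)
  set b := μ.real (invest r)ᶜ
  refine ⟨ENNReal.ofReal a • Measure.dirac x₁ + ENNReal.ofReal b • Measure.dirac x₂, hμ',
    (((hdirac x₁).smul_measure ENNReal.ofReal_ne_top).add_measure
      ((hdirac x₂).smul_measure ENNReal.ofReal_ne_top)).integrableOn, ?_⟩
  rw [dppPayoff_smul_add_smul measureReal_nonneg measureReal_nonneg (hdirac x₁).integrableOn
    (hdirac x₂).integrableOn, dppPayoff_dirac hx₁s, dppPayoff_dirac hx₂,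
    Measure.dirac_apply_of_mem hx₁, ENNReal.toReal_one, hbad]
  have h₁ : 0 ≤ a * (δ * V (φ x₁)) :=
    mul_nonneg measureReal_nonneg (mul_nonneg hδ.1 (hVφ x₁ hx₁s))
  have h₂ : 0 ≤ b * ((1 - δ) * (Measure.dirac x₂ (invest r)).toReal + δ * V (φ x₂)) :=
    mul_nonneg measureReal_nonneg <|
      add_nonneg (mul_nonneg h1δ ENNReal.toReal_nonneg) (mul_nonneg hδ.1 (hVφ x₂ hx₂))
  linarith

theorem SatisfiesDPP.exists_integrableOn_lt_dppPayoff_add (hV : SatisfiesDPP r δ φ V)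
    (hδ : δ ∈ Icc (0 : ℝ) 1) (hVφ : ∀ q ∈ stdSimplex ℝ Ω, 0 ≤ V (φ q))
    (hp : p ∈ stdSimplex ℝ Ω) {ε : ℝ} (hε : 0 < ε) :
    ∃ μ ∈ Splittings p, IntegrableOn (fun q => V (φ q)) (stdSimplex ℝ Ω) μ ∧
      V p < dppPayoff r δ φ V μ + ε := by
  have hlt : V p - ε < sSup (dppPayoff r δ φ V '' Splittings p) := by
    rw [← hV p hp]
    linarith
  obtain ⟨_, ⟨μ₀, hμ₀, rfl⟩, hlt₀⟩ :=
    exists_lt_of_lt_csSup ((Set.nonempty_of_mem (dirac_mem_splittings hp)).image _) hlt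
  obtain ⟨μ, hμ, hint, hge⟩ := exists_integrableOn_dppPayoff_ge hδ hVφ hp hμ₀
  exact ⟨μ, hμ, hint, by linarith⟩

theorem SatisfiesDPP.smul_add_smul_dppPayoff_le (hV : SatisfiesDPP r δ φ V)
    (hbdd : ∀ p, BddAbove (dppPayoff r δ φ V '' Splittings p))
    (hx : x ∈ stdSimplex ℝ Ω) (hy : y ∈ stdSimplex ℝ Ω) (hμ : μ ∈ Splittings x)
    (hν : ν ∈ Splittings y) (hμV : IntegrableOn (fun q => V (φ q)) (stdSimplex ℝ Ω) μ)
    (hνV : IntegrableOn (fun q => V (φ q)) (stdSimplex ℝ Ω) ν) {a b : ℝ} (ha : 0 ≤ a)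
    (hb : 0 ≤ b) (hab : a + b = 1) :
    a * dppPayoff r δ φ V μ + b * dppPayoff r δ φ V ν ≤ V (a • x + b • y) := by
  have := hμ.1
  have := hν.1
  rw [← dppPayoff_smul_add_smul ha hb hμV hνV]
  exact hV.dppPayoff_le_s1 (hbdd _) (convex_stdSimplex ℝ Ω hx hy ha hb hab)
    (smul_add_smul_mem_splittings hμ hν ha hb hab)

end DynamicProgramming

end

theorem dpp_concave_general [Fintype Ω]
    (r : Ω → ℝ) (δ : ℝ) (hδ : δ ∈ Ico (0 : ℝ) 1)
    (φ : (Ω → ℝ) → Ω → ℝ)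
    (hφmaps : MapsTo φ (stdSimplex ℝ Ω) (stdSimplex ℝ Ω))
    (V : (Ω → ℝ) → ℝ)
    (hVb : ∃ C, ∀ p ∈ stdSimplex ℝ Ω, |V p| ≤ C)
    (hV : SatisfiesDPP r δ φ V) :
    ConcaveOn ℝ (stdSimplex ℝ Ω) V := by
  obtain ⟨C, hC⟩ := hVb
  have hδ' : δ ∈ Icc (0 : ℝ) 1 := Ico_subset_Icc_self hδ
  have hVφ : ∀ q ∈ stdSimplex ℝ Ω, 0 ≤ V (φ q) := fun q hq => hV.nonneg_s1 hδ hφmaps hC (hφmaps hq)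
  refine ⟨convex_stdSimplex ℝ Ω, fun x hx y hy a b ha hb hab =>
    le_of_forall_pos_le_add fun ε hε => ?_⟩
  obtain ⟨μ, hμ, hμV, hμε⟩ := hV.exists_integrableOn_lt_dppPayoff_add hδ' hVφ hx hε
  obtain ⟨ν, hν, hνV, hνε⟩ := hV.exists_integrableOn_lt_dppPayoff_add hδ' hVφ hy hε
  have hmix := hV.smul_add_smul_dppPayoff_le (bddAbove_dppPayoff_image hδ' hφmaps hC) hx hy
    hμ hν hμV hνV ha hb hab
  calc a • V x + b • V y
      ≤ a * (dppPayoff r δ φ V μ + ε) + b * (dppPayoff r δ φ V ν + ε) := by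
        rw [smul_eq_mul, smul_eq_mul]
        gcongr
    _ = a * dppPayoff r δ φ V μ + b * dppPayoff r δ φ V ν + ε := by
        linear_combination ε * hab
    _ ≤ V (a • x + b • y) + ε := by gcongr

/-- every bounded solution of the dynamic programming equation is concave
on the simplex. -/
theorem dpp_concave [Fintype Ω] [Nonempty Ω]
    (r : Ω → ℝ) (δ : ℝ) (hδ : δ ∈ Ico (0 : ℝ) 1)
    (φ : (Ω → ℝ) → Ω → ℝ)
    (hφmaps : MapsTo φ (stdSimplex ℝ Ω) (stdSimplex ℝ Ω))
    (hφcont : ContinuousOn φ (stdSimplex ℝ Ω))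
    (hφaff : ∀ x ∈ stdSimplex ℝ Ω, ∀ y ∈ stdSimplex ℝ Ω, ∀ t ∈ Icc (0 : ℝ) 1,
      φ (t • x + (1 - t) • y) = t • φ x + (1 - t) • φ y)
    (V : (Ω → ℝ) → ℝ)
    (hVb : ∃ C, ∀ p ∈ stdSimplex ℝ Ω, |V p| ≤ C)
    (hV : SatisfiesDPP r δ φ V) :
    ConcaveOn ℝ (stdSimplex ℝ Ω) V :=
  dpp_concave_general r δ hδ φ hφmaps V hVb hV
end
end

section
/- For every p ∈ J, the value of the linear program (LP) equals the value of the linear program (LP'): max{ Σ_ω π₁(ω) : (π₁,π₂) ∈ cone(E) × cone(Ω⁻), π₁ + π₂ = p } = max{ Σ_ω π(ω) : π ∈ ℝ^Ω, 0 ≤ π(ω) ≤ p(ω) for all ω ∈ Ω, Σ_ω π(ω)r(ω) ≥ 0 }. -/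
/-!
Every `x ≥ 0` with `⟨x,r⟩ = 0` is a nonnegative combination, with total weight its mass, of the
points of `F` on the edges `[a, b]` of the simplex with `r a ≥ 0 > r b` (or, if `x` lives on
`{r = 0}`, of the vertices there); these points are extreme in `F`. Hence `cone(E)` contains every
such `x` of mass at most `1`, and `cone(Ω⁻)` every `x ≥ 0` of mass at most `1` supported on `Ω⁻`.
So every feasible pair of (LP) gives a feasible point of (LP') of the same value, and conversely a
feasible `π` of (LP') can be raised to `p` on `Ω⁺` and then moved towards `p` until `⟨π,r⟩ = 0`:
this only increases its mass, and what remains of `p` lives on `Ω⁻`.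
-/

open Set

noncomputable section

variable {Ω : Type*}

/-- The investment frontier `F = {p ∈ Δ(Ω) : ⟨p,r⟩ = 0}`. -/
def frontier' [Fintype Ω] (r : Ω → ℝ) : Set (Ω → ℝ) :=
  {p | p ∈ stdSimplex ℝ Ω ∧ ∑ ω, p ω * r ω = 0}

/-- `cone(A)`: the convex hull of `A ∪ {0}`. -/
def cone' (A : Set (Ω → ℝ)) : Set (Ω → ℝ) :=
  convexHull ℝ (insert 0 A)

/-- The set of unit vectors corresponding to states with negative payoff. -/
def negVertices [DecidableEq Ω] (r : Ω → ℝ) : Set (Ω → ℝ) :=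
  {x | ∃ ω, r ω < 0 ∧ x = Pi.single ω 1}

theorem mem_extremePoints_of_forall_support_subset {ι : Type*} {S : Set (ι → ℝ)} {v : ι → ℝ}
    (hS : ∀ x ∈ S, 0 ≤ x) (hv : v ∈ S)
    (huniq : ∀ x ∈ S, (∀ i, v i = 0 → x i = 0) → x = v) :
    v ∈ S.extremePoints ℝ := by
  refine ⟨hv, fun x₁ hx₁ x₂ hx₂ ⟨a, b, ha, hb, _, hv_eq⟩ => huniq x₁ hx₁ fun i hvi => ?_⟩
  have hsum : a * x₁ i + b * x₂ i = 0 := by simpa [← hv_eq] using hvi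
  have h₁ : 0 ≤ a * x₁ i := mul_nonneg ha.le (hS x₁ hx₁ i)
  have h₂ : 0 ≤ b * x₂ i := mul_nonneg hb.le (hS x₂ hx₂ i)
  exact (mul_eq_zero.1 ((add_eq_zero_iff_of_nonneg h₁ h₂).1 hsum).1).resolve_left ha.ne'

theorem cone'_subset {A S : Set (Ω → ℝ)} (hS : Convex ℝ S) (h0 : 0 ∈ S) (hA : A ⊆ S) :
    cone' A ⊆ S :=
  convexHull_min (insert_subset h0 hA) hS

theorem sum_smul_mem_cone' {ι : Type*} {s : Finset ι} {w : ι → ℝ} {z : ι → Ω → ℝ}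
    {A : Set (Ω → ℝ)} (hw₀ : ∀ i ∈ s, 0 ≤ w i) (hw₁ : ∑ i ∈ s, w i ≤ 1)
    (hz : ∀ i ∈ s, z i ∈ A) :
    ∑ i ∈ s, w i • z i ∈ cone' A := by
  have hconv : Convex ℝ (cone' A) := convex_convexHull ℝ _
  have h0 : (0 : Ω → ℝ) ∈ cone' A := subset_convexHull ℝ _ (mem_insert _ _)
  rcases (Finset.sum_nonneg hw₀).eq_or_lt with hW | hW
  · rw [Finset.sum_eq_zero fun i hi => by
      rw [(Finset.sum_eq_zero_iff_of_nonneg hw₀).1 hW.symm i hi, zero_smul]]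
    exact h0
  · have hc : s.centerMass w z ∈ cone' A :=
      hconv.centerMass_mem hw₀ hW fun i hi => subset_convexHull ℝ _ (mem_insert_of_mem _ (hz i hi))
    rw [← smul_inv_smul₀ hW.ne' (∑ i ∈ s, w i • z i)]
    exact (hconv.starConvex h0).smul_mem hc hW.le hw₁

section payoff

variable {r : Ω → ℝ}

section decidableEq

variable [DecidableEq Ω]

/-- The point of the edge `[a, b]` of the simplex where `⟨·,r⟩` vanishes, if `r a ≥ 0 > r b`. -/
def edgePoint (r : Ω → ℝ) (a b : Ω) : Ω → ℝ :=
  (r a - r b)⁻¹ • (r a • Pi.single b 1 - r b • Pi.single a 1)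

theorem edgePoint_apply_of_ne {a b ω : Ω} (ha : ω ≠ a) (hb : ω ≠ b) : edgePoint r a b ω = 0 := by
  simp [edgePoint, ha, hb]

theorem cone'_negVertices_subset : cone' (negVertices r) ⊆ Ici 0 :=
  cone'_subset (convex_Ici 0) self_mem_Ici <| by
    rintro _ ⟨ω, _, rfl⟩
    exact Pi.single_nonneg.2 zero_le_one

end decidableEq

variable [Fintype Ω]

def nonnegStates (r : Ω → ℝ) : Finset Ω := {ω | 0 ≤ r ω}

def negStates (r : Ω → ℝ) : Finset Ω := {ω | r ω < 0}

theorem sum_nonnegStates_add_sum_negStates (r : Ω → ℝ) (f : Ω → ℝ) :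
    ∑ ω ∈ nonnegStates r, f ω + ∑ ω ∈ negStates r, f ω = ∑ ω, f ω := by
  simp only [nonnegStates, negStates, ← not_le]
  exact Finset.sum_filter_add_sum_filter_not _ _ _

theorem sum_apply_sum_smul_of_sum_eq_one {ι : Type*} {s : Finset ι} {w : ι → ℝ} {z : ι → Ω → ℝ}
    (hz : ∀ i ∈ s, ∑ ω, z i ω = 1) :
    ∑ ω, (∑ i ∈ s, w i • z i) ω = ∑ i ∈ s, w i := by
  simp only [Finset.sum_apply, Pi.smul_apply, smul_eq_mul]
  rw [Finset.sum_comm]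
  exact Finset.sum_congr rfl fun i hi => by rw [← Finset.mul_sum, hz i hi, mul_one]

theorem cone'_extremePoints_frontier'_subset :
    cone' ((frontier' r).extremePoints ℝ) ⊆ {x | 0 ≤ x ∧ ∑ ω, x ω * r ω = 0} := by
  have hlin : IsLinearMap ℝ fun x : Ω → ℝ => ∑ ω, x ω * r ω :=
    ⟨fun x y => by simp [add_mul, Finset.sum_add_distrib],
      fun c x => by simp [mul_assoc, Finset.mul_sum]⟩
  exact cone'_subset ((convex_Ici 0).inter (convex_hyperplane hlin 0)) ⟨le_rfl, by simp⟩
    fun y hy => ⟨fun ω => hy.1.1.1 ω, hy.1.2⟩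

theorem exists_between_sum_mul_eq_zero {q p : Ω → ℝ} (hqp : q ≤ p)
    (hq : 0 ≤ ∑ ω, q ω * r ω) (hp : ∑ ω, p ω * r ω < 0) :
    ∃ y, q ≤ y ∧ y ≤ p ∧ ∑ ω, y ω * r ω = 0 ∧ ∀ ω, q ω = p ω → y ω = p ω := by
  set a := ∑ ω, q ω * r ω
  set b := ∑ ω, p ω * r ω
  have hab : 0 < a - b := by linarith
  set s := a / (a - b)
  have hs0 : 0 ≤ s := div_nonneg hq hab.le
  have hs1 : s ≤ 1 := (div_le_one hab).2 (by linarith)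
  refine ⟨q + s • (p - q), fun ω => ?_, fun ω => ?_, ?_, fun ω h => ?_⟩
  · exact le_add_of_nonneg_right (mul_nonneg hs0 (sub_nonneg.2 (hqp ω)))
  · show q ω + s * (p ω - q ω) ≤ p ω
    nlinarith [hqp ω]
  · calc ∑ ω, (q + s • (p - q)) ω * r ω
          = ∑ ω, (q ω * r ω + s * (p ω * r ω - q ω * r ω)) :=
            Finset.sum_congr rfl fun ω _ => by
              simp only [Pi.add_apply, Pi.smul_apply, Pi.sub_apply, smul_eq_mul]; ring
      _ = a + s * (b - a) := by
            rw [Finset.sum_add_distrib, ← Finset.mul_sum, Finset.sum_sub_distrib]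
      _ = 0 := by simp only [s]; field_simp; ring
  · simp [h]

variable [DecidableEq Ω]

theorem single_mem_extremePoints_frontier' {a : Ω} (ha : r a = 0) :
    Pi.single a 1 ∈ (frontier' r).extremePoints ℝ := by
  refine mem_extremePoints_of_forall_support_subset (fun x hx => fun ω => hx.1.1 ω)
    ⟨single_mem_stdSimplex ℝ a, by simp [Pi.single_apply, ite_mul, ha]⟩ fun x hx hsupp => ?_
  have hx0 : ∀ ω, ω ≠ a → x ω = 0 := fun ω hω => hsupp ω (by simp [hω])
  have hxa : x a = 1 := by
    rw [← hx.1.2, Finset.sum_eq_single a (fun ω _ hω => hx0 ω hω) (by simp)]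
  ext ω
  rcases eq_or_ne ω a with rfl | hω
  · simp [hxa]
  · simp [hω, hx0 ω hω]

section edge

variable {a b : Ω}

theorem edgePoint_mem_frontier' (ha : 0 ≤ r a) (hb : r b < 0) : edgePoint r a b ∈ frontier' r := by
  have hab : a ≠ b := by rintro rfl; linarith
  have hd : r a - r b ≠ 0 := by linarith
  refine ⟨⟨fun ω => ?_, ?_⟩, ?_⟩
  · simp only [edgePoint, Pi.smul_apply, Pi.sub_apply, Pi.single_apply, smul_eq_mul]
    have : 0 < r a - r b := by linarith
    split_ifs <;> first | positivity | nlinarith [inv_pos.2 this]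
  · simp only [edgePoint, Pi.smul_apply, Pi.sub_apply, Pi.single_apply, smul_eq_mul, mul_ite,
      mul_one, mul_zero, ← Finset.mul_sum, Finset.sum_sub_distrib, Finset.sum_ite_eq',
      Finset.mem_univ, if_true]
    field_simp
  · simp only [edgePoint, Pi.smul_apply, Pi.sub_apply, smul_eq_mul, Pi.single_apply, mul_sub,
      sub_mul, mul_ite, ite_mul, mul_one, mul_zero, zero_mul, Finset.sum_sub_distrib,
      Finset.sum_ite_eq', Finset.mem_univ, if_true]
    ring

theorem eq_edgePoint_of_mem_frontier' (hr : r a ≠ r b) {x : Ω → ℝ} (hx : x ∈ frontier' r)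
    (hx0 : ∀ ω, ω ≠ a ∧ ω ≠ b → x ω = 0) : x = edgePoint r a b := by
  have hab : a ≠ b := fun h => hr (congrArg r h)
  have hd : r a - r b ≠ 0 := sub_ne_zero.2 hr
  have hsum : x a + x b = 1 := by rw [← hx.1.2, Fintype.sum_eq_add a b hab hx0]
  have hdot : x a * r a + x b * r b = 0 := by
    rw [← hx.2, Fintype.sum_eq_add a b hab fun ω hω => by rw [hx0 ω hω, zero_mul]]
  have hxa : x a = -r b / (r a - r b) := by
    field_simp
    linear_combination hdot - r b * hsum
  have hxb : x b = r a / (r a - r b) := by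
    field_simp
    linear_combination r a * hsum - hdot
  ext ω
  by_cases hωa : ω = a
  · subst hωa; simp [edgePoint, hab, hxa, div_eq_inv_mul]
  by_cases hωb : ω = b
  · subst hωb; simp [edgePoint, Ne.symm hab, hxb, div_eq_inv_mul]
  rw [hx0 ω ⟨hωa, hωb⟩, edgePoint_apply_of_ne hωa hωb]

theorem edgePoint_mem_extremePoints_frontier' (ha : 0 ≤ r a) (hb : r b < 0) :
    edgePoint r a b ∈ (frontier' r).extremePoints ℝ :=
  mem_extremePoints_of_forall_support_subset (fun x hx => fun ω => hx.1.1 ω)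
    (edgePoint_mem_frontier' ha hb) fun x hx hsupp =>
      eq_edgePoint_of_mem_frontier' (by linarith) hx fun ω hω =>
        hsupp ω (edgePoint_apply_of_ne hω.1 hω.2)

end edge

/-- The weight of the edge `[a, b]` is `x a * x b * (r a - r b) / m`, with `m` the payoff
`∑ a ∈ Ω⁺, x a * r a = ∑ b ∈ Ω⁻, x b * (-r b)`, so that coordinate `a` collects
`x a * (∑ b ∈ Ω⁻, x b * (-r b)) / m = x a` and coordinate `b` collects
`x b * (∑ a ∈ Ω⁺, x a * r a) / m = x b`. -/
theorem sum_smul_edgePoint {x : Ω → ℝ} (hxr : ∑ ω, x ω * r ω = 0)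
    (hm : ∑ a ∈ nonnegStates r, x a * r a ≠ 0) :
    ∑ ab ∈ nonnegStates r ×ˢ negStates r,
      (x ab.1 * x ab.2 * (r ab.1 - r ab.2) / ∑ a ∈ nonnegStates r, x a * r a) •
        edgePoint r ab.1 ab.2 = x := by
  set P := nonnegStates r
  set N := negStates r
  set m := ∑ a ∈ P, x a * r a
  have hmN : ∑ b ∈ N, x b * r b = -m := by
    rw [← sum_nonnegStates_add_sum_negStates r] at hxr
    linarith
  ext ω
  have hterm : ∀ a ∈ P, ∀ b ∈ N,
      (x a * x b * (r a - r b) / m) * edgePoint r a b ω =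
        ((x a * r a) * (x b * (Pi.single b 1 : Ω → ℝ) ω) -
          (x a * (Pi.single a 1 : Ω → ℝ) ω) * (x b * r b)) / m := by
    intro a ha b hb
    have hd : r a - r b ≠ 0 := by
      simp only [P, N, nonnegStates, negStates, Finset.mem_filter] at ha hb
      linarith
    simp only [edgePoint, Pi.smul_apply, Pi.sub_apply, smul_eq_mul]
    field_simp
  rw [Finset.sum_apply, Finset.sum_product]
  simp only [Pi.smul_apply, smul_eq_mul]
  rw [Finset.sum_congr rfl fun a ha => Finset.sum_congr rfl (hterm a ha)]
  simp only [← Finset.sum_div, Finset.sum_sub_distrib, ← Finset.sum_mul_sum, hmN]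
  simp only [Pi.single_apply, mul_ite, mul_one, mul_zero, Finset.sum_ite_eq]
  by_cases hω : ω ∈ P
  · rw [if_neg (by simpa [P, N, nonnegStates, negStates] using hω), if_pos hω]
    field_simp
    ring
  · rw [if_pos (by simpa [P, N, nonnegStates, negStates] using hω), if_neg hω]
    field_simp
    ring

theorem mem_cone'_of_single_mem {A : Set (Ω → ℝ)} {x : Ω → ℝ} (hx0 : 0 ≤ x)
    (hx1 : ∑ ω, x ω ≤ 1) (hA : ∀ ω, x ω ≠ 0 → Pi.single ω 1 ∈ A) : x ∈ cone' A := by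
  have hx : ∑ ω ∈ Finset.univ.filter (x · ≠ 0), x ω • (Pi.single ω 1 : Ω → ℝ) = x := by
    rw [Finset.sum_filter_of_ne fun ω _ h => left_ne_zero_of_smul h]
    simp_rw [← Pi.single_smul, smul_eq_mul, mul_one, Finset.univ_sum_single]
  rw [← hx]
  exact sum_smul_mem_cone' (fun ω _ => hx0 ω) (by rwa [Finset.sum_filter_ne_zero])
    fun ω hω => hA ω (Finset.mem_filter.1 hω).2

theorem mem_cone'_negVertices {x : Ω → ℝ} (hx0 : 0 ≤ x) (hx1 : ∑ ω, x ω ≤ 1)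
    (hneg : ∀ ω, x ω ≠ 0 → r ω < 0) : x ∈ cone' (negVertices r) :=
  mem_cone'_of_single_mem hx0 hx1 fun ω hω => ⟨ω, hneg ω hω, rfl⟩

theorem mem_cone'_extremePoints_frontier' {x : Ω → ℝ} (hx0 : 0 ≤ x)
    (hxr : ∑ ω, x ω * r ω = 0) (hx1 : ∑ ω, x ω ≤ 1) :
    x ∈ cone' ((frontier' r).extremePoints ℝ) := by
  have hP : ∀ a ∈ nonnegStates r, 0 ≤ x a * r a := fun a ha =>
    mul_nonneg (hx0 a) (Finset.mem_filter.1 ha).2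
  have hN : ∀ b ∈ negStates r, x b * r b ≤ 0 := fun b hb =>
    mul_nonpos_of_nonneg_of_nonpos (hx0 b) (Finset.mem_filter.1 hb).2.le
  have hsplit := sum_nonnegStates_add_sum_negStates r (fun ω => x ω * r ω)
  rcases (Finset.sum_nonneg hP).eq_or_lt with hm | hm
  · refine mem_cone'_of_single_mem hx0 hx1 fun ω hω => single_mem_extremePoints_frontier' ?_
    have hmN : ∑ b ∈ negStates r, x b * r b = 0 := by linarith
    have hxr0 : x ω * r ω = 0 := by
      by_cases hω' : 0 ≤ r ω
      · exact (Finset.sum_eq_zero_iff_of_nonneg hP).1 hm.symm ω (by simpa [nonnegStates])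
      · exact (Finset.sum_eq_zero_iff_of_nonpos hN).1 hmN ω (by simpa [negStates] using hω')
    exact (mul_eq_zero.1 hxr0).resolve_left hω
  · rw [← sum_smul_edgePoint hxr hm.ne']
    refine sum_smul_mem_cone' (fun ab hab => ?_) ?_ fun ab hab => ?_
    · obtain ⟨ha, hb⟩ := Finset.mem_product.1 hab
      have := (Finset.mem_filter.1 ha).2
      have := (Finset.mem_filter.1 hb).2
      exact div_nonneg (mul_nonneg (mul_nonneg (hx0 _) (hx0 _)) (by linarith)) hm.le
    · have hmass := sum_apply_sum_smul_of_sum_eq_one (s := nonnegStates r ×ˢ negStates r)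
        (w := fun ab => x ab.1 * x ab.2 * (r ab.1 - r ab.2) / ∑ a ∈ nonnegStates r, x a * r a)
        (z := fun ab => edgePoint r ab.1 ab.2) fun ab hab => by
          obtain ⟨ha, hb⟩ := Finset.mem_product.1 hab
          exact (edgePoint_mem_frontier' (Finset.mem_filter.1 ha).2 (Finset.mem_filter.1 hb).2).1.2
      rw [sum_smul_edgePoint hxr hm.ne'] at hmass
      linarith
    · obtain ⟨ha, hb⟩ := Finset.mem_product.1 hab
      exact edgePoint_mem_extremePoints_frontier' (Finset.mem_filter.1 ha).2
        (Finset.mem_filter.1 hb).2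

theorem exists_cone'_decomposition {p π : Ω → ℝ}
    (hp : p ∈ stdSimplex ℝ Ω) (hpJ : ∑ ω, p ω * r ω < 0) (hπ0 : 0 ≤ π) (hπp : π ≤ p)
    (hπr : 0 ≤ ∑ ω, π ω * r ω) :
    ∃ π₁ π₂ : Ω → ℝ, π₁ ∈ cone' ((frontier' r).extremePoints ℝ) ∧ π₂ ∈ cone' (negVertices r) ∧
      π₁ + π₂ = p ∧ ∑ ω, π ω ≤ ∑ ω, π₁ ω := by
  set q : Ω → ℝ := fun ω => if 0 ≤ r ω then p ω else π ω
  have hπq : π ≤ q := fun ω => by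
    by_cases h : 0 ≤ r ω <;> simp [q, h, hπp ω]
  have hqp : q ≤ p := fun ω => by
    by_cases h : 0 ≤ r ω <;> simp [q, h, hπp ω]
  have hqr : 0 ≤ ∑ ω, q ω * r ω := hπr.trans <| Finset.sum_le_sum fun ω _ => by
    by_cases h : 0 ≤ r ω
    · simpa [q, h] using mul_le_mul_of_nonneg_right (hπp ω) h
    · simp [q, h]
  obtain ⟨y, hqy, hyp, hyr, hy_eq⟩ := exists_between_sum_mul_eq_zero hqp hqr hpJ
  have hy0 : 0 ≤ y := hπ0.trans (hπq.trans hqy)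
  refine ⟨y, p - y, mem_cone'_extremePoints_frontier' hy0 hyr ?_,
    mem_cone'_negVertices (sub_nonneg.2 hyp) ?_ fun ω hω => ?_, add_sub_cancel _ _,
    Finset.sum_le_sum fun ω _ => hπq ω |>.trans (hqy ω)⟩
  · exact hp.2 ▸ Finset.sum_le_sum fun ω _ => hyp ω
  · exact hp.2 ▸ Finset.sum_le_sum fun ω _ => sub_le_self _ (hy0 ω)
  · by_contra h
    exact hω (sub_eq_zero.2 (hy_eq ω (by simp [q, not_lt.1 h])).symm)

end payoff

theorem lp_eq_lp'_general [Fintype Ω] [DecidableEq Ω] (r : Ω → ℝ)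
    (p : Ω → ℝ) (hp : p ∈ stdSimplex ℝ Ω) (hpJ : ∑ ω, p ω * r ω < 0) :
    sSup {s : ℝ | ∃ π₁ π₂ : Ω → ℝ,
        π₁ ∈ cone' (Set.extremePoints ℝ (frontier' r)) ∧
        π₂ ∈ cone' (negVertices r) ∧
        π₁ + π₂ = p ∧ s = ∑ ω, π₁ ω}
      = sSup {s : ℝ | ∃ π : Ω → ℝ,
          (∀ ω, 0 ≤ π ω ∧ π ω ≤ p ω) ∧ 0 ≤ ∑ ω, π ω * r ω ∧ s = ∑ ω, π ω} := by
  refine csSup_eq_csSup_of_forall_exists_le ?_ ?_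
  · rintro _ ⟨π₁, π₂, h₁, h₂, rfl, rfl⟩
    obtain ⟨hπ₁0, hπ₁r⟩ := cone'_extremePoints_frontier'_subset h₁
    exact ⟨_, ⟨π₁, fun ω => ⟨hπ₁0 ω, le_add_of_nonneg_right (cone'_negVertices_subset h₂ ω)⟩,
      hπ₁r.ge, rfl⟩, le_rfl⟩
  · rintro _ ⟨π, hπ, hπr, rfl⟩
    obtain ⟨π₁, π₂, h₁, h₂, hsum, hle⟩ :=
      exists_cone'_decomposition hp hpJ (fun ω => (hπ ω).1) (fun ω => (hπ ω).2) hπr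
    exact ⟨_, ⟨π₁, π₂, h₁, h₂, hsum, rfl⟩, hle⟩

/-- for every `p ∈ J`, the value of the linear program (LP), over pairs
`(π₁,π₂) ∈ cone(E) × cone(Ω⁻)` with `π₁ + π₂ = p` maximizing the mass of `π₁`, equals the
value of the linear program (LP'), over `0 ≤ π ≤ p` with `⟨π,r⟩ ≥ 0` maximizing the mass
of `π`. Here `E` is the set of extreme points of the investment frontier `F`. -/
theorem lp_eq_lp' [Fintype Ω] [Nonempty Ω] [DecidableEq Ω] (r : Ω → ℝ)
    (hplus : ∃ ω, 0 ≤ r ω) (hminus : ∃ ω, r ω < 0)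
    (p : Ω → ℝ) (hp : p ∈ stdSimplex ℝ Ω) (hpJ : ∑ ω, p ω * r ω < 0) :
    sSup {s : ℝ | ∃ π₁ π₂ : Ω → ℝ,
        π₁ ∈ cone' (Set.extremePoints ℝ (frontier' r)) ∧
        π₂ ∈ cone' (negVertices r) ∧
        π₁ + π₂ = p ∧ s = ∑ ω, π₁ ω}
      = sSup {s : ℝ | ∃ π : Ω → ℝ,
          (∀ ω, 0 ≤ π ω ∧ π ω ≤ p ω) ∧ 0 ≤ ∑ ω, π ω * r ω ∧ s = ∑ ω, π ω} :=
  lp_eq_lp'_general r p hp hpJ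

end
end

section
/- For every p ∈ Δ(Ω) with ⟨p,r⟩ ≤ 0, the vector π*(p) is an optimal solution of the linear program (LP'): π*(p) is feasible (0 ≤ π*(p) ≤ p componentwise and ⟨π*(p),r⟩ = 0 ≥ 0) and its total mass Σ_ω π*(p)(ω) equals the value of (LP'). -/
open Set

noncomputable section

variable {Ω : Type*}

/-- `L_k(p) = Σ_{ω∈Ω⁺} p(ω)r(ω) + Σ_{i≤k} p(ω_i)r(ω_i)`, where `ω_{i+1} = e i` enumerates
`Ω⁻` by decreasing payoff. -/
def Lfun [Fintype Ω] (r : Ω → ℝ) {K : ℕ} (e : Fin K → Ω) (k : ℕ) (p : Ω → ℝ) : ℝ :=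
  ∑ ω ∈ Finset.univ.filter (fun ω => 0 ≤ r ω), p ω * r ω
    + ∑ i ∈ Finset.univ.filter (fun i : Fin K => (i : ℕ) + 1 ≤ k), p (e i) * r (e i)

/-- `k*(p) = min {k ≥ 1 : L_k(p) ≤ 0}`. -/
def kstar [Fintype Ω] (r : Ω → ℝ) {K : ℕ} (e : Fin K → Ω) (p : Ω → ℝ) : ℕ :=
  sInf {k : ℕ | 1 ≤ k ∧ Lfun r e k p ≤ 0}

/-- The optimal solution `π*(p)` of the program (LP'): it agrees with `p` on `Ω⁺` and on
`ω_i` for `i < k*(p)`, vanishes on `ω_i` for `i > k*(p)`, and equals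
`−L_{k*(p)−1}(p)/r(ω_{k*(p)})` at `ω_{k*(p)}`. -/
def piStar [Fintype Ω] [DecidableEq Ω] (r : Ω → ℝ) {K : ℕ} (e : Fin K → Ω) (p : Ω → ℝ) :
    Ω → ℝ :=
  (fun ω => if 0 ≤ r ω then p ω else 0)
    + ∑ i : Fin K,
        (if (i : ℕ) + 1 < kstar r e p then p (e i)
         else if (i : ℕ) + 1 = kstar r e p then -(Lfun r e (kstar r e p - 1) p) / r (e i)
         else 0) • (Pi.single (e i) 1 : Ω → ℝ)

/-- The weight `a_I` of the greedy splitting: the total mass of `π*(p)`. -/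
def aI [Fintype Ω] [DecidableEq Ω] (r : Ω → ℝ) {K : ℕ} (e : Fin K → Ω) (p : Ω → ℝ) : ℝ :=
  ∑ ω, piStar r e p ω

/-- The posterior `q_I` of the greedy splitting: the normalization of `π*(p)`. -/
def qI [Fintype Ω] [DecidableEq Ω] (r : Ω → ℝ) {K : ℕ} (e : Fin K → Ω) (p : Ω → ℝ) :
    Ω → ℝ :=
  (aI r e p)⁻¹ • piStar r e p

/-- The posterior `q_J` of the greedy splitting: the normalization of `p − π*(p)`. -/
def qJ [Fintype Ω] [DecidableEq Ω] (r : Ω → ℝ) {K : ℕ} (e : Fin K → Ω) (p : Ω → ℝ) :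
    Ω → ℝ :=
  (1 - aI r e p)⁻¹ • (p - piStar r e p)

/-!
`π*(p)` is the greedy solution of a fractional knapsack problem: it takes the full mass of `p`
on every state whose payoff exceeds the threshold `t = r(ω_{k*})`, nothing below it, and splits
`ω_{k*}` so that the budget `⟨π, r⟩ ≥ 0` is exactly exhausted. The threshold is a dual
certificate: for every feasible `π`, `π(ω) (r(ω) - t) ≤ π*(ω) (r(ω) - t)` pointwise, and summing
gives `-t Σ π ≤ ⟨π, r⟩ - t Σ π ≤ ⟨π*, r⟩ - t Σ π* = -t Σ π*`.
-/

theorem sum_le_sum_of_threshold {ι : Type*} [Fintype ι] {p q π r : ι → ℝ} {t : ℝ} (ht : t < 0)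
    (hπ0 : ∀ i, 0 ≤ π i) (hπp : ∀ i, π i ≤ p i) (hπr : 0 ≤ ∑ i, π i * r i)
    (hqr : ∑ i, q i * r i ≤ 0) (hq_above : ∀ i, t < r i → q i = p i)
    (hq_below : ∀ i, r i < t → q i = 0) :
    ∑ i, π i ≤ ∑ i, q i := by
  have hpointwise : ∀ i, π i * (r i - t) ≤ q i * (r i - t) := by
    intro i
    rcases lt_trichotomy t (r i) with h | h | h
    · rw [hq_above i h]
      exact mul_le_mul_of_nonneg_right (hπp i) (by linarith)
    · simp [h]
    · rw [hq_below i h, zero_mul]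
      exact mul_nonpos_of_nonneg_of_nonpos (hπ0 i) (by linarith)
  have hsum : ∀ f : ι → ℝ, ∑ i, f i * (r i - t) = ∑ i, f i * r i - (∑ i, f i) * t := by
    intro f
    simp only [mul_sub, Finset.sum_sub_distrib, Finset.sum_mul]
  have hle := Finset.sum_le_sum fun i (_ : i ∈ Finset.univ) => hpointwise i
  rw [hsum, hsum] at hle
  exact le_of_mul_le_mul_right (by linarith : (∑ i, π i) * -t ≤ (∑ i, q i) * -t) (by linarith)

section Greedy

variable [Fintype Ω] {K : ℕ} {r : Ω → ℝ} {e : Fin K → Ω}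

theorem sum_eq_sum_nonneg_add_sum_enum (he_inj : Function.Injective e)
    (he_range : ∀ ω, r ω < 0 ↔ ω ∈ Set.range e) (f : Ω → ℝ) :
    ∑ ω, f ω = ∑ ω ∈ Finset.univ.filter (fun ω => 0 ≤ r ω), f ω + ∑ i, f (e i) := by
  classical
  rw [← Finset.sum_filter_add_sum_filter_not Finset.univ (fun ω => 0 ≤ r ω),
    ← Finset.sum_image fun i _ j _ h => he_inj h]
  congr 2
  ext ω
  simp [he_range]

theorem sum_mul_eq_Lfun (he_inj : Function.Injective e)
    (he_range : ∀ ω, r ω < 0 ↔ ω ∈ Set.range e) {f : Ω → ℝ} {k : ℕ}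
    (hf : ∀ i : Fin K, k ≤ (i : ℕ) → f (e i) = 0) :
    ∑ ω, f ω * r ω = Lfun r e k f := by
  rw [sum_eq_sum_nonneg_add_sum_enum he_inj he_range, Lfun]
  congr 1
  refine (Finset.sum_filter_of_ne fun i _ hi => ?_).symm
  by_contra hk
  exact hi (by rw [hf i (by omega), zero_mul])

theorem Lfun_succ (f : Ω → ℝ) (i : Fin K) :
    Lfun r e (i + 1) f = Lfun r e i f + f (e i) * r (e i) := by
  have hfilter : (Finset.univ.filter fun j : Fin K => (j : ℕ) + 1 ≤ i + 1)
      = insert i (Finset.univ.filter fun j : Fin K => (j : ℕ) + 1 ≤ i) := by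
    ext j
    simp only [Finset.mem_filter, Finset.mem_univ, true_and, Finset.mem_insert, Fin.ext_iff]
    omega
  rw [Lfun, Lfun, hfilter, Finset.sum_insert (by simp)]
  ring

theorem Lfun_congr {f g : Ω → ℝ} {k : ℕ} (hpos : ∀ ω, 0 ≤ r ω → f ω = g ω)
    (hneg : ∀ i : Fin K, (i : ℕ) < k → f (e i) = g (e i)) :
    Lfun r e k f = Lfun r e k g := by
  unfold Lfun
  congr 1 <;> refine Finset.sum_congr rfl fun x hx => ?_ <;>
    rw [Finset.mem_filter] at hx
  · rw [hpos x hx.2]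
  · rw [hneg x (by omega)]

theorem Lfun_zero_nonneg {f : Ω → ℝ} (hf : ∀ ω, 0 ≤ f ω) : 0 ≤ Lfun r e 0 f := by
  refine add_nonneg (Finset.sum_nonneg fun ω hω => ?_) (Finset.sum_eq_zero fun i hi => ?_).ge
  · exact mul_nonneg (hf ω) (Finset.mem_filter.mp hω).2
  · simp at hi

theorem exists_kstar_eq_succ {p : Ω → ℝ} (hK : 0 < K) (hp : Lfun r e K p ≤ 0) :
    ∃ i₀ : Fin K, kstar r e p = i₀ + 1 ∧ Lfun r e (i₀ + 1) p ≤ 0 := by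
  have hK_mem : K ∈ {k : ℕ | 1 ≤ k ∧ Lfun r e k p ≤ 0} := ⟨hK, hp⟩
  obtain ⟨hk_pos, hk⟩ : 1 ≤ kstar r e p ∧ Lfun r e (kstar r e p) p ≤ 0 := Nat.sInf_mem ⟨K, hK_mem⟩
  have hk_le : kstar r e p ≤ K := Nat.sInf_le hK_mem
  refine ⟨⟨kstar r e p - 1, by omega⟩, by simp only; omega, ?_⟩
  rwa [Nat.sub_add_cancel hk_pos]

theorem Lfun_pred_kstar_nonneg {p : Ω → ℝ} (h0 : 0 ≤ Lfun r e 0 p) :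
    0 ≤ Lfun r e (kstar r e p - 1) p := by
  -- the first case includes `kstar r e p = 0`, the junk value `sInf ∅`
  rcases le_or_gt (kstar r e p) 1 with h | h
  · rwa [Nat.sub_eq_zero_of_le h]
  · have hnot : kstar r e p - 1 ∉ {k : ℕ | 1 ≤ k ∧ Lfun r e k p ≤ 0} :=
      Nat.notMem_of_lt_sInf (by unfold kstar at h ⊢; omega)
    simp only [Set.mem_ofPred_eq, not_and, not_le] at hnot
    exact (hnot (by omega)).le

variable [DecidableEq Ω]

theorem piStar_apply_of_nonneg (he_range : ∀ ω, r ω < 0 ↔ ω ∈ Set.range e) (p : Ω → ℝ)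
    {ω : Ω} (hω : 0 ≤ r ω) : piStar r e p ω = p ω := by
  have hne : ∀ i, (Pi.single (e i) 1 : Ω → ℝ) ω = 0 := fun i =>
    Pi.single_eq_of_ne (fun h => ((he_range ω).mpr ⟨i, h.symm⟩).not_ge hω) 1
  rw [piStar, Pi.add_apply, Finset.sum_apply, if_pos hω, add_eq_left]
  refine Finset.sum_eq_zero fun i _ => ?_
  split_ifs <;> simp [hne]

theorem piStar_apply_enum (he_inj : Function.Injective e)
    (he_range : ∀ ω, r ω < 0 ↔ ω ∈ Set.range e) (p : Ω → ℝ) (i : Fin K) :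
    piStar r e p (e i)
      = if (i : ℕ) + 1 < kstar r e p then p (e i)
        else if (i : ℕ) + 1 = kstar r e p then -(Lfun r e (kstar r e p - 1) p) / r (e i)
        else 0 := by
  have hneg : ¬ 0 ≤ r (e i) := not_le.mpr <| (he_range (e i)).mpr ⟨i, rfl⟩
  simp only [piStar, Pi.add_apply, Finset.sum_apply, Pi.smul_apply, smul_eq_mul, if_neg hneg,
    zero_add]
  rw [Finset.sum_eq_single i (fun j _ hj => by
    rw [Pi.single_eq_of_ne (fun h => hj (he_inj h.symm)), mul_zero]) (by simp)]
  simp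

theorem piStar_apply_of_lt (he_inj : Function.Injective e)
    (he_range : ∀ ω, r ω < 0 ↔ ω ∈ Set.range e) {p : Ω → ℝ} {i₀ i : Fin K}
    (hk : kstar r e p = i₀ + 1) (hi : i < i₀) : piStar r e p (e i) = p (e i) := by
  rw [piStar_apply_enum he_inj he_range, if_pos (by rw [hk]; omega)]

theorem piStar_apply_kstar (he_inj : Function.Injective e)
    (he_range : ∀ ω, r ω < 0 ↔ ω ∈ Set.range e) {p : Ω → ℝ} {i₀ : Fin K}
    (hk : kstar r e p = i₀ + 1) : piStar r e p (e i₀) = -Lfun r e i₀ p / r (e i₀) := by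
  rw [piStar_apply_enum he_inj he_range, if_neg (by omega), if_pos hk.symm, hk, Nat.add_sub_cancel]

theorem piStar_apply_of_gt (he_inj : Function.Injective e)
    (he_range : ∀ ω, r ω < 0 ↔ ω ∈ Set.range e) {p : Ω → ℝ} {i₀ i : Fin K}
    (hk : kstar r e p = i₀ + 1) (hi : i₀ < i) : piStar r e p (e i) = 0 := by
  rw [piStar_apply_enum he_inj he_range, if_neg (by rw [hk]; omega),
    if_neg (by rw [hk]; omega)]

theorem piStar_mem_Icc (he_inj : Function.Injective e)
    (he_range : ∀ ω, r ω < 0 ↔ ω ∈ Set.range e) {p : Ω → ℝ} (hp : ∀ ω, 0 ≤ p ω) {i₀ : Fin K}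
    (hk : kstar r e p = i₀ + 1) (hL : 0 ≤ Lfun r e i₀ p) (hL_succ : Lfun r e (i₀ + 1) p ≤ 0)
    (ω : Ω) : piStar r e p ω ∈ Set.Icc 0 (p ω) := by
  by_cases hω : 0 ≤ r ω
  · rw [piStar_apply_of_nonneg he_range p hω]
    exact ⟨hp ω, le_rfl⟩
  obtain ⟨i, rfl⟩ := (he_range ω).mp (not_le.mp hω)
  rcases lt_trichotomy i i₀ with hi | rfl | hi
  · rw [piStar_apply_of_lt he_inj he_range hk hi]
    exact ⟨hp _, le_rfl⟩
  · have hr : r (e i) < 0 := not_le.mp hω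
    rw [Lfun_succ] at hL_succ
    rw [piStar_apply_kstar he_inj he_range hk, Set.mem_Icc, div_le_iff_of_neg hr]
    exact ⟨div_nonneg_of_nonpos (by linarith) hr.le, by linarith⟩
  · rw [piStar_apply_of_gt he_inj he_range hk hi]
    exact ⟨le_rfl, hp _⟩

theorem sum_piStar_mul_eq_zero (he_inj : Function.Injective e)
    (he_range : ∀ ω, r ω < 0 ↔ ω ∈ Set.range e) {p : Ω → ℝ} {i₀ : Fin K}
    (hk : kstar r e p = i₀ + 1) : ∑ ω, piStar r e p ω * r ω = 0 := by
  have hr : r (e i₀) < 0 := (he_range _).mpr ⟨i₀, rfl⟩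
  calc ∑ ω, piStar r e p ω * r ω = Lfun r e (i₀ + 1) (piStar r e p) :=
        sum_mul_eq_Lfun he_inj he_range fun i hi =>
          piStar_apply_of_gt he_inj he_range hk (by omega)
    _ = Lfun r e i₀ p + piStar r e p (e i₀) * r (e i₀) := by
        rw [Lfun_succ, Lfun_congr (r := r) (e := e) (fun ω hω => piStar_apply_of_nonneg he_range p hω)
          fun i hi => piStar_apply_of_lt he_inj he_range hk hi]
    _ = 0 := by
        rw [piStar_apply_kstar he_inj he_range hk, div_mul_cancel₀ _ hr.ne]
        ring

theorem piStar_eq_of_lt (he_inj : Function.Injective e)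
    (he_range : ∀ ω, r ω < 0 ↔ ω ∈ Set.range e) (he_anti : Antitone fun i => r (e i))
    {p : Ω → ℝ} {i₀ : Fin K} (hk : kstar r e p = i₀ + 1) {ω : Ω} (h : r (e i₀) < r ω) :
    piStar r e p ω = p ω := by
  by_cases hω : 0 ≤ r ω
  · exact piStar_apply_of_nonneg he_range p hω
  obtain ⟨i, rfl⟩ := (he_range ω).mp (not_le.mp hω)
  exact piStar_apply_of_lt he_inj he_range hk (he_anti.reflect_lt h)

theorem piStar_eq_zero_of_lt (he_inj : Function.Injective e)
    (he_range : ∀ ω, r ω < 0 ↔ ω ∈ Set.range e) (he_anti : Antitone fun i => r (e i))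
    {p : Ω → ℝ} {i₀ : Fin K} (hk : kstar r e p = i₀ + 1) {ω : Ω} (h : r ω < r (e i₀)) :
    piStar r e p ω = 0 := by
  obtain ⟨i, rfl⟩ := (he_range ω).mp (h.trans ((he_range _).mpr ⟨i₀, rfl⟩))
  exact piStar_apply_of_gt he_inj he_range hk (he_anti.reflect_lt h)

end Greedy

theorem piStar_optimal_general [Fintype Ω] [DecidableEq Ω] {K : ℕ}
    (r : Ω → ℝ) (e : Fin K → Ω)
    (hK : 0 < K)
    (he_inj : Function.Injective e)
    (he_range : ∀ ω, r ω < 0 ↔ ω ∈ Set.range e)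
    (he_anti : Antitone fun i => r (e i))
    (p : Ω → ℝ) (hp : p ∈ stdSimplex ℝ Ω) (hpr : ∑ ω, p ω * r ω ≤ 0) :
    (∀ ω, 0 ≤ piStar r e p ω) ∧
    (∀ ω, piStar r e p ω ≤ p ω) ∧
    (∑ ω, piStar r e p ω * r ω = 0) ∧
    (∀ π : Ω → ℝ, (∀ ω, 0 ≤ π ω) → (∀ ω, π ω ≤ p ω) → 0 ≤ ∑ ω, π ω * r ω →
      ∑ ω, π ω ≤ ∑ ω, piStar r e p ω) := by
  have hp0 : ∀ ω, 0 ≤ p ω := hp.1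
  obtain ⟨i₀, hk, hL_succ⟩ := exists_kstar_eq_succ hK
    (by rwa [← sum_mul_eq_Lfun he_inj he_range fun i hi => absurd i.isLt (by omega)])
  have hL : 0 ≤ Lfun r e i₀ p := by
    simpa [hk] using Lfun_pred_kstar_nonneg (r := r) (e := e) (Lfun_zero_nonneg hp0)
  have hIcc := piStar_mem_Icc he_inj he_range hp0 hk hL hL_succ
  have hsum := sum_piStar_mul_eq_zero he_inj he_range hk
  refine ⟨fun ω => (hIcc ω).1, fun ω => (hIcc ω).2, hsum, fun π hπ0 hπp hπr => ?_⟩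
  exact sum_le_sum_of_threshold ((he_range _).mpr ⟨i₀, rfl⟩) hπ0 hπp hπr hsum.le
    (fun _ => piStar_eq_of_lt he_inj he_range he_anti hk)
    (fun _ => piStar_eq_zero_of_lt he_inj he_range he_anti hk)

/-- for `p ∈ Δ(Ω)` with `⟨p,r⟩ ≤ 0`, the vector `π*(p)` is an optimal solution
of the linear program (LP'): it is feasible (`0 ≤ π*(p) ≤ p` and `⟨π*(p),r⟩ = 0`), and its
total mass is maximal among all feasible vectors, i.e. equals the value of (LP'). -/
theorem piStar_optimal [Fintype Ω] [DecidableEq Ω] {K : ℕ}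
    (r : Ω → ℝ) (e : Fin K → Ω)
    (hK : 0 < K) (hplus : ∃ ω, 0 ≤ r ω)
    (he_inj : Function.Injective e)
    (he_range : ∀ ω, r ω < 0 ↔ ω ∈ Set.range e)
    (he_anti : Antitone fun i => r (e i))
    (p : Ω → ℝ) (hp : p ∈ stdSimplex ℝ Ω) (hpr : ∑ ω, p ω * r ω ≤ 0) :
    (∀ ω, 0 ≤ piStar r e p ω) ∧
    (∀ ω, piStar r e p ω ≤ p ω) ∧
    (∑ ω, piStar r e p ω * r ω = 0) ∧
    (∀ π : Ω → ℝ, (∀ ω, 0 ≤ π ω) → (∀ ω, π ω ≤ p ω) → 0 ≤ ∑ ω, π ω * r ω →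
      ∑ ω, π ω ≤ ∑ ω, piStar r e p ω) :=
  piStar_optimal_general r e hK he_inj he_range he_anti p hp hpr

end
end
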